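/- arXiv:2604.14318 — 6 statements merged into one kernel-verified Lean document; each statement's English description precedes it below -/
import Mathlib

section
/- Let X₁ and X₂ be standard Borel spaces and let ν and ρ be Borel probability measures on X₁ × X₂. Let ρ_{1→2} be a disintegration kernel of ρ over its first marginal, and write π_i for the i-th marginal of a measure on X₁ × X₂. Then KL(ν ‖ ρ) ≥ KL(π₁ν ‖ π₁ρ) + KL(π₂ν ‖ (π₁ν)ρ_{1→2}), an inequality in [0,∞], where (π₁ν)ρ_{1→2} denotes the probability measure A ↦ ∫_{X₁} ρ_{1→2}(x₁, A) (π₁ν)(dx₁) on X₂. -/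
open MeasureTheory ProbabilityTheory
open scoped ENNReal NNReal Classical

section Aux
variable {α : Type*} [MeasurableSpace α]

lemma lintegral_inv_rnDeriv_le {μ ν : Measure α} [μ.HaveLebesgueDecomposition ν]
    (h : μ ≪ ν) : ∫⁻ x, (μ.rnDeriv ν x)⁻¹ ∂μ ≤ ν Set.univ := by
  nth_rewrite 1 [← Measure.withDensity_rnDeriv_eq μ ν h]
  erw [lintegral_withDensity_eq_lintegral_mul _ (Measure.measurable_rnDeriv μ ν)
    (Measure.measurable_rnDeriv μ ν).inv]
  calc ∫⁻ x, (μ.rnDeriv ν x * (μ.rnDeriv ν x)⁻¹) ∂ν ≤ ∫⁻ _, 1 ∂ν :=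
        lintegral_mono fun x => ENNReal.mul_inv_le_one _
    _ = ν Set.univ := lintegral_one

lemma nonneg_integral_log {μ : Measure α} [IsProbabilityMeasure μ] {ψ : α → ℝ≥0∞}
    (hψm : AEMeasurable ψ μ) (hpos : ∀ᵐ x ∂μ, 0 < ψ x) (hfin : ∀ᵐ x ∂μ, ψ x < ∞)
    (hinv : ∫⁻ x, (ψ x)⁻¹ ∂μ ≤ 1)
    (hint : Integrable (fun x => Real.log (ψ x).toReal) μ) :
    0 ≤ ∫ x, Real.log (ψ x).toReal ∂μ := by
  have hinvm : AEMeasurable (fun x => (ψ x)⁻¹) μ := hψm.inv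
  have hinv_fin : ∀ᵐ x ∂μ, (ψ x)⁻¹ < ∞ := by
    filter_upwards [hpos] with x hx
    simp [ENNReal.inv_lt_top, hx]
  have hI : Integrable (fun x => ((ψ x)⁻¹).toReal) μ :=
    integrable_toReal_of_lintegral_ne_top hinvm
      (lt_of_le_of_lt hinv ENNReal.one_lt_top).ne
  have hle : ∀ᵐ x ∂μ, -Real.log (ψ x).toReal ≤ ((ψ x)⁻¹).toReal - 1 := by
    filter_upwards [hpos, hfin] with x h0 h1
    rw [← Real.log_inv, ← ENNReal.toReal_inv]
    exact Real.log_le_sub_one_of_pos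
      (ENNReal.toReal_pos (by simp [h1.ne]) (by simp [h0.ne']))
  have hmono := integral_mono_ae hint.neg (hI.sub (integrable_const 1)) hle
  simp only [Pi.sub_apply, Pi.neg_apply] at hmono
  rw [integral_neg] at hmono
  have h2 : ∫ x, (((ψ x)⁻¹).toReal - 1) ∂μ = (∫ x, ((ψ x)⁻¹).toReal ∂μ) - 1 := by
    rw [integral_sub hI (integrable_const 1), integral_const]; simp
  have h3 : ∫ x, ((ψ x)⁻¹).toReal ∂μ ≤ 1 := by
    rw [integral_toReal hinvm hinv_fin]
    simpa using ENNReal.toReal_mono ENNReal.one_ne_top hinv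
  linarith

lemma neg_log_toReal_le {a : ℝ≥0∞} (h0 : 0 < a) (h1 : a < ∞) :
    -Real.log a.toReal ≤ (a⁻¹).toReal := by
  rw [← Real.log_inv, ← ENNReal.toReal_inv]
  have hpos : 0 < (a⁻¹).toReal :=
    ENNReal.toReal_pos (by simp [h1.ne]) (by simp [h0.ne'])
  linarith [Real.log_le_sub_one_of_pos hpos]

end Aux

/-- The Kullback–Leibler divergence `KL(μ‖ν) = ∫ log(dμ/dν) dμ ∈ [0,∞]`, equal to `∞` if `μ`
is not absolutely continuous with respect to `ν` or if the logarithmic density fails to be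
integrable (for probability measures the negative part of `log(dμ/dν)` is always
`μ`-integrable, so non-integrability means the integral is `+∞`). -/
noncomputable def klDiv {X : Type*} [MeasurableSpace X] (μ ν : Measure X) : ℝ≥0∞ :=
  if μ ≪ ν ∧ Integrable (fun x => Real.log (μ.rnDeriv ν x).toReal) μ then
    ENNReal.ofReal (∫ x, Real.log (μ.rnDeriv ν x).toReal ∂μ)
  else ⊤

/-- **Entropy on products (inequality).** For Borel probability measures `ν, ρ` on a product
of standard Borel spaces, and a disintegration kernel `ρ12` of `ρ` over its first marginal,
`KL(ν‖ρ) ≥ KL(π₁ν‖π₁ρ) + KL(π₂ν‖(π₁ν)ρ12)`, where `(π₁ν)ρ12 = ν.fst.bind ρ12`. -/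
theorem klDiv_fst_add_klDiv_snd_le
    {X₁ X₂ : Type*} [MeasurableSpace X₁] [StandardBorelSpace X₁]
    [MeasurableSpace X₂] [StandardBorelSpace X₂]
    (ν ρ : Measure (X₁ × X₂)) [IsProbabilityMeasure ν] [IsProbabilityMeasure ρ]
    (ρ12 : Kernel X₁ X₂) [IsMarkovKernel ρ12]
    (hρ : ρ.fst.compProd ρ12 = ρ) :
    klDiv ν.fst ρ.fst + klDiv ν.snd (ν.fst.bind fun x => ρ12 x) ≤ klDiv ν ρ := by
  classical
  by_cases hcase : ν ≪ ρ ∧ Integrable (fun x => Real.log (ν.rnDeriv ρ x).toReal) ν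
  swap
  · conv_rhs => rw [klDiv]
    rw [if_neg hcase]; exact le_top
  obtain ⟨hν, hint⟩ := hcase
  set μ₂ : Measure X₂ := ν.fst.bind fun x => ρ12 x with hμ₂def
  have hμ₂univ : μ₂ Set.univ = 1 := by
    rw [hμ₂def, Measure.bind_apply MeasurableSet.univ (Kernel.measurable ρ12).aemeasurable]
    simp
  have : IsProbabilityMeasure μ₂ := ⟨hμ₂univ⟩
  -- absolute continuity of marginals
  have h1 : ν.fst ≪ ρ.fst := by
    rw [Measure.fst, Measure.fst]; exact hν.map measurable_fst
  have h2 : ν.snd ≪ μ₂ := by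
    refine Measure.AbsolutelyContinuous.mk fun B hB hB0 => ?_
    rw [hμ₂def, Measure.bind_apply hB (Kernel.measurable ρ12).aemeasurable] at hB0
    set N : Set X₁ := {x | ρ12 x B ≠ 0} with hNdef
    have hNm : MeasurableSet N := (Kernel.measurable_coe ρ12 hB) (measurableSet_singleton 0) |>.compl
    have hN0 : ν.fst N = 0 := by
      have := (lintegral_eq_zero_iff (Kernel.measurable_coe ρ12 hB)).mp hB0
      simpa [hNdef, ae_iff, Filter.EventuallyEq] using this
    have hνN : ν (N ×ˢ (Set.univ : Set X₂)) = 0 := by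
      rw [Measure.fst_apply hNm] at hN0
      simpa [Set.prod_univ] using hN0
    have hρc : ρ (Nᶜ ×ˢ B) = 0 := by
      rw [← hρ, Measure.compProd_apply (hNm.compl.prod hB)]
      have hz : ∀ x, ρ12 x (Prod.mk x ⁻¹' (Nᶜ ×ˢ B)) = 0 := by
        intro x
        by_cases hx : x ∈ N
        · have : Prod.mk x ⁻¹' (Nᶜ ×ˢ B) = ∅ := by
            ext y; simp [Set.mem_prod, hx]
          simp [this]
        · have hB' : Prod.mk x ⁻¹' (Nᶜ ×ˢ B) = B := by
            ext y; simp [Set.mem_prod, hx]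
          rw [hB']
          simpa [hNdef] using hx
      simp [hz]
    have hνc : ν (Nᶜ ×ˢ B) = 0 := hν hρc
    have hsub : (Set.univ : Set X₁) ×ˢ B ⊆ (N ×ˢ Set.univ) ∪ (Nᶜ ×ˢ B) := by
      rintro ⟨x, y⟩ ⟨-, hy⟩
      by_cases hx : x ∈ N
      · exact Or.inl ⟨hx, trivial⟩
      · exact Or.inr ⟨hx, hy⟩
    rw [Measure.snd_apply hB]
    have : ν (Prod.snd ⁻¹' B) ≤ 0 := by
      calc ν (Prod.snd ⁻¹' B) = ν ((Set.univ : Set X₁) ×ˢ B) := by rw [Set.univ_prod]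
        _ ≤ ν ((N ×ˢ Set.univ) ∪ (Nᶜ ×ˢ B)) := measure_mono hsub
        _ ≤ ν (N ×ˢ Set.univ) + ν (Nᶜ ×ˢ B) := measure_union_le _ _
        _ = 0 := by rw [hνN, hνc, add_zero]
    exact le_antisymm this zero_le
  -- notation
  set f := ν.rnDeriv ρ with hfdef
  set g₁ := ν.fst.rnDeriv ρ.fst with hg₁def
  set g₂ := ν.snd.rnDeriv μ₂ with hg₂def
  have hfm : Measurable f := Measure.measurable_rnDeriv ν ρ
  have hg₁m : Measurable g₁ := Measure.measurable_rnDeriv _ _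
  have hg₂m : Measurable g₂ := Measure.measurable_rnDeriv _ _
  set G : X₁ × X₂ → ℝ≥0∞ := fun p => g₁ p.1 * g₂ p.2 with hGdef
  have hGm : Measurable G := (hg₁m.comp measurable_fst).mul (hg₂m.comp measurable_snd)
  set w : X₁ × X₂ → ℝ≥0∞ := fun p => f p / G p with hwdef
  have hwm : Measurable w := hfm.div hGm
  -- Step (I): ∫ G dρ ≤ 1
  have hI : ∫⁻ p, G p ∂ρ ≤ 1 := by
    conv_lhs => rw [← hρ]
    rw [Measure.lintegral_compProd hGm]
    have e1 : (fun x => ∫⁻ y, G (x, y) ∂(ρ12 x))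
        = fun x => g₁ x * ∫⁻ y, g₂ y ∂(ρ12 x) := by
      funext x
      simp only [hGdef]
      exact lintegral_const_mul _ hg₂m
    rw [e1]
    calc ∫⁻ x, g₁ x * ∫⁻ y, g₂ y ∂(ρ12 x) ∂ρ.fst
        = ∫⁻ x, ∫⁻ y, g₂ y ∂(ρ12 x) ∂(ρ.fst.withDensity g₁) := by
          rw [lintegral_withDensity_eq_lintegral_mul _ hg₁m (Measurable.lintegral_kernel hg₂m)]
          rfl
      _ = ∫⁻ x, ∫⁻ y, g₂ y ∂(ρ12 x) ∂ν.fst := by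
          rw [Measure.withDensity_rnDeriv_eq _ _ h1]
      _ = ∫⁻ y, g₂ y ∂μ₂ := (Measure.lintegral_bind (Kernel.measurable ρ12).aemeasurable hg₂m.aemeasurable).symm
      _ ≤ ν.snd Set.univ := Measure.lintegral_rnDeriv_le
      _ = 1 := measure_univ
  -- a.e. positivity and finiteness
  have hf_pos : ∀ᵐ p ∂ν, 0 < f p := Measure.rnDeriv_pos hν
  have hf_fin : ∀ᵐ p ∂ν, f p < ∞ := (Measure.rnDeriv_lt_top ν ρ).filter_mono hν.ae_le
  have hg₁ae : ∀ᵐ p ∂ν, 0 < g₁ p.1 ∧ g₁ p.1 < ∞ := by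
    have h' : ∀ᵐ y ∂ν.fst, 0 < g₁ y ∧ g₁ y < ∞ :=
      (Measure.rnDeriv_pos h1).and ((Measure.rnDeriv_lt_top ν.fst ρ.fst).filter_mono h1.ae_le)
    have hs : MeasurableSet {y | 0 < g₁ y ∧ g₁ y < ∞} := by
      have he : {y | 0 < g₁ y ∧ g₁ y < ∞} = (g₁ ⁻¹' {0})ᶜ ∩ (g₁ ⁻¹' {∞})ᶜ := by
        ext y; simp [pos_iff_ne_zero, lt_top_iff_ne_top]
      rw [he]
      exact ((hg₁m (measurableSet_singleton 0)).compl).inter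
        ((hg₁m (measurableSet_singleton ∞)).compl)
    exact (ae_map_iff measurable_fst.aemeasurable hs).mp h'
  have hg₂ae : ∀ᵐ p ∂ν, 0 < g₂ p.2 ∧ g₂ p.2 < ∞ := by
    have h' : ∀ᵐ y ∂ν.snd, 0 < g₂ y ∧ g₂ y < ∞ :=
      (Measure.rnDeriv_pos h2).and ((Measure.rnDeriv_lt_top ν.snd μ₂).filter_mono h2.ae_le)
    have hs : MeasurableSet {y | 0 < g₂ y ∧ g₂ y < ∞} := by
      have he : {y | 0 < g₂ y ∧ g₂ y < ∞} = (g₂ ⁻¹' {0})ᶜ ∩ (g₂ ⁻¹' {∞})ᶜ := by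
        ext y; simp [pos_iff_ne_zero, lt_top_iff_ne_top]
      rw [he]
      exact ((hg₂m (measurableSet_singleton 0)).compl).inter
        ((hg₂m (measurableSet_singleton ∞)).compl)
    exact (ae_map_iff measurable_snd.aemeasurable hs).mp h'
  have hGae : ∀ᵐ p ∂ν, 0 < G p ∧ G p < ∞ := by
    filter_upwards [hg₁ae, hg₂ae] with p hp hq
    exact ⟨ENNReal.mul_pos hp.1.ne' hq.1.ne', ENNReal.mul_lt_top hp.2 hq.2⟩
  have hw_pos : ∀ᵐ p ∂ν, 0 < w p := by
    filter_upwards [hf_pos, hGae] with p h h'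
    exact ENNReal.div_pos h.ne' h'.2.ne
  have hw_fin : ∀ᵐ p ∂ν, w p < ∞ := by
    filter_upwards [hf_fin, hGae] with p h h'
    exact ENNReal.div_lt_top h.ne h'.1.ne'
  -- Step (II): ∫ w⁻¹ dν ≤ 1
  have hII : ∫⁻ p, (w p)⁻¹ ∂ν ≤ 1 := by
    have hae : (fun p => (w p)⁻¹) =ᵐ[ν] fun p => G p / f p := by
      filter_upwards [hf_fin, hGae] with p h1' h2'
      exact ENNReal.inv_div (Or.inr h1'.ne) (Or.inl h2'.1.ne')
    rw [lintegral_congr_ae hae]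
    calc ∫⁻ p, G p / f p ∂ν = ∫⁻ p, f p * (G p / f p) ∂ρ := by
          conv_lhs => rw [← Measure.withDensity_rnDeriv_eq ν ρ hν]
          erw [lintegral_withDensity_eq_lintegral_mul _ hfm (hGm.div hfm)]
          rfl
      _ ≤ ∫⁻ p, G p ∂ρ := by
          refine lintegral_mono fun p => ?_
          rw [div_eq_mul_inv, mul_left_comm]
          calc G p * (f p * (f p)⁻¹) ≤ G p * 1 := mul_le_mul_right (ENNReal.mul_inv_le_one _) _
            _ = G p := mul_one _
      _ ≤ 1 := hI
  -- log identity
  have hlog : ∀ᵐ p ∂ν, Real.log (w p).toReal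
      = Real.log (f p).toReal - Real.log (g₁ p.1).toReal - Real.log (g₂ p.2).toReal := by
    filter_upwards [hf_pos, hf_fin, hg₁ae, hg₂ae] with p h0 h1' hg1 hg2
    have hfr : (f p).toReal ≠ 0 := (ENNReal.toReal_pos h0.ne' h1'.ne).ne'
    have hg1r : (g₁ p.1).toReal ≠ 0 := (ENNReal.toReal_pos hg1.1.ne' hg1.2.ne).ne'
    have hg2r : (g₂ p.2).toReal ≠ 0 := (ENNReal.toReal_pos hg2.1.ne' hg2.2.ne).ne'
    have hwt : (w p).toReal = (f p).toReal / ((g₁ p.1).toReal * (g₂ p.2).toReal) := by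
      simp only [hwdef, hGdef]
      rw [ENNReal.toReal_div, ENNReal.toReal_mul]
    rw [hwt, Real.log_div hfr (mul_ne_zero hg1r hg2r), Real.log_mul hg1r hg2r]
    ring
  -- inverse integrability
  have hinv1_l : ∫⁻ p, (g₁ p.1)⁻¹ ∂ν ≤ 1 := by
    have e : ∫⁻ y, (g₁ y)⁻¹ ∂ν.fst = ∫⁻ p, (g₁ p.1)⁻¹ ∂ν :=
      lintegral_map hg₁m.inv measurable_fst
    rw [← e]
    calc ∫⁻ y, (g₁ y)⁻¹ ∂ν.fst ≤ ρ.fst Set.univ := lintegral_inv_rnDeriv_le h1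
      _ = 1 := measure_univ
  have hinv2_l : ∫⁻ p, (g₂ p.2)⁻¹ ∂ν ≤ 1 := by
    have e : ∫⁻ y, (g₂ y)⁻¹ ∂ν.snd = ∫⁻ p, (g₂ p.2)⁻¹ ∂ν :=
      lintegral_map hg₂m.inv measurable_snd
    rw [← e]
    calc ∫⁻ y, (g₂ y)⁻¹ ∂ν.snd ≤ μ₂ Set.univ := lintegral_inv_rnDeriv_le h2
      _ = 1 := hμ₂univ
  have hinv1_int : Integrable (fun p => ((g₁ p.1)⁻¹).toReal) ν :=
    integrable_toReal_of_lintegral_ne_top ((hg₁m.comp measurable_fst).inv).aemeasurable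
      (lt_of_le_of_lt hinv1_l ENNReal.one_lt_top).ne
  have hinv2_int : Integrable (fun p => ((g₂ p.2)⁻¹).toReal) ν :=
    integrable_toReal_of_lintegral_ne_top ((hg₂m.comp measurable_snd).inv).aemeasurable
      (lt_of_le_of_lt hinv2_l ENNReal.one_lt_top).ne
  have hinvw_int : Integrable (fun p => ((w p)⁻¹).toReal) ν :=
    integrable_toReal_of_lintegral_ne_top (hwm.inv).aemeasurable
      (lt_of_le_of_lt hII ENNReal.one_lt_top).ne
  -- lower bounds on the logarithms
  have hb1 : ∀ᵐ p ∂ν, -Real.log (g₁ p.1).toReal ≤ ((g₁ p.1)⁻¹).toReal := by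
    filter_upwards [hg₁ae] with p h; exact neg_log_toReal_le h.1 h.2
  have hb2 : ∀ᵐ p ∂ν, -Real.log (g₂ p.2).toReal ≤ ((g₂ p.2)⁻¹).toReal := by
    filter_upwards [hg₂ae] with p h; exact neg_log_toReal_le h.1 h.2
  have hbw : ∀ᵐ p ∂ν, -Real.log (w p).toReal ≤ ((w p)⁻¹).toReal := by
    filter_upwards [hw_pos, hw_fin] with p h h'; exact neg_log_toReal_le h h'
  set M : X₁ × X₂ → ℝ := fun p => |Real.log (f p).toReal| + ((w p)⁻¹).toReal
      + ((g₁ p.1)⁻¹).toReal + ((g₂ p.2)⁻¹).toReal with hMdef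
  have hMint : Integrable M ν := ((hint.abs.add hinvw_int).add hinv1_int).add hinv2_int
  have habs1 : ∀ᵐ p ∂ν, ‖Real.log (g₁ p.1).toReal‖ ≤ M p := by
    filter_upwards [hlog, hb1, hb2, hbw] with p he h1' h2' hw'
    rw [Real.norm_eq_abs, abs_le]
    simp only [hMdef]
    constructor
    · have := abs_nonneg (Real.log (f p).toReal)
      have := ENNReal.toReal_nonneg (a := (w p)⁻¹)
      have := ENNReal.toReal_nonneg (a := (g₂ p.2)⁻¹)
      linarith
    · have hFle := le_abs_self (Real.log (f p).toReal)
      have := ENNReal.toReal_nonneg (a := (g₁ p.1)⁻¹)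
      linarith
  have habs2 : ∀ᵐ p ∂ν, ‖Real.log (g₂ p.2).toReal‖ ≤ M p := by
    filter_upwards [hlog, hb1, hb2, hbw] with p he h1' h2' hw'
    rw [Real.norm_eq_abs, abs_le]
    simp only [hMdef]
    constructor
    · have := abs_nonneg (Real.log (f p).toReal)
      have := ENNReal.toReal_nonneg (a := (w p)⁻¹)
      have := ENNReal.toReal_nonneg (a := (g₁ p.1)⁻¹)
      linarith
    · have hFle := le_abs_self (Real.log (f p).toReal)
      have := ENNReal.toReal_nonneg (a := (g₂ p.2)⁻¹)
      linarith
  have hL1int : Integrable (fun p => Real.log (g₁ p.1).toReal) ν :=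
    hMint.mono' (Real.measurable_log.comp
      (hg₁m.comp measurable_fst).ennreal_toReal).aestronglyMeasurable habs1
  have hL2int : Integrable (fun p => Real.log (g₂ p.2).toReal) ν :=
    hMint.mono' (Real.measurable_log.comp
      (hg₂m.comp measurable_snd).ennreal_toReal).aestronglyMeasurable habs2
  have hWint : Integrable (fun p => Real.log (w p).toReal) ν := by
    refine ((hint.sub hL1int).sub hL2int).congr ?_
    filter_upwards [hlog] with p hp
    exact hp.symm
  -- nonnegativity of the three integrals
  have h0W : 0 ≤ ∫ p, Real.log (w p).toReal ∂ν :=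
    nonneg_integral_log hwm.aemeasurable hw_pos hw_fin hII hWint
  have h0L1 : 0 ≤ ∫ p, Real.log (g₁ p.1).toReal ∂ν :=
    nonneg_integral_log (hg₁m.comp measurable_fst).aemeasurable
      (hg₁ae.mono fun p h => h.1) (hg₁ae.mono fun p h => h.2) hinv1_l hL1int
  have h0L2 : 0 ≤ ∫ p, Real.log (g₂ p.2).toReal ∂ν :=
    nonneg_integral_log (hg₂m.comp measurable_snd).aemeasurable
      (hg₂ae.mono fun p h => h.1) (hg₂ae.mono fun p h => h.2) hinv2_l hL2int
  -- sum identity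
  have hsum : ∫ p, Real.log (f p).toReal ∂ν
      = ∫ p, Real.log (w p).toReal ∂ν + ∫ p, Real.log (g₁ p.1).toReal ∂ν
        + ∫ p, Real.log (g₂ p.2).toReal ∂ν := by
    have he : (fun p => Real.log (f p).toReal)
        =ᵐ[ν] fun p => Real.log (w p).toReal + Real.log (g₁ p.1).toReal
          + Real.log (g₂ p.2).toReal := by
      filter_upwards [hlog] with p hp; linarith
    have hW1 : Integrable (fun p => Real.log (w p).toReal + Real.log (g₁ p.1).toReal) ν :=
      hWint.add hL1int
    rw [integral_congr_ae he, integral_add hW1 hL2int, integral_add hWint hL1int]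
  -- marginal integrals
  have hA : ∫ y, Real.log (g₁ y).toReal ∂ν.fst = ∫ p, Real.log (g₁ p.1).toReal ∂ν :=
    integral_map measurable_fst.aemeasurable
      (Real.measurable_log.comp hg₁m.ennreal_toReal).aestronglyMeasurable
  have hB : ∫ y, Real.log (g₂ y).toReal ∂ν.snd = ∫ p, Real.log (g₂ p.2).toReal ∂ν :=
    integral_map measurable_snd.aemeasurable
      (Real.measurable_log.comp hg₂m.ennreal_toReal).aestronglyMeasurable
  have hAint : Integrable (fun y => Real.log (g₁ y).toReal) ν.fst :=
    (integrable_map_measure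
      (Real.measurable_log.comp hg₁m.ennreal_toReal).aestronglyMeasurable
      measurable_fst.aemeasurable).mpr hL1int
  have hBint : Integrable (fun y => Real.log (g₂ y).toReal) ν.snd :=
    (integrable_map_measure
      (Real.measurable_log.comp hg₂m.ennreal_toReal).aestronglyMeasurable
      measurable_snd.aemeasurable).mpr hL2int
  -- conclude
  simp only [klDiv]
  rw [← hfdef, ← hg₁def, ← hg₂def]
  rw [if_pos ⟨h1, hAint⟩, if_pos ⟨h2, hBint⟩, if_pos ⟨hν, hint⟩]
  rw [← ENNReal.ofReal_add (by rw [hA]; exact h0L1) (by rw [hB]; exact h0L2)]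
  refine ENNReal.ofReal_le_ofReal ?_
  rw [hA, hB]
  linarith
end

section
/- Let μ₁, μ₂ and ν be probability measures on a measurable space, let s ∈ (0,1), and assume KL(μ₁‖ν) < ∞ and KL(μ₂‖ν) < ∞. Then KL(s·μ₁ + (1−s)·μ₂ ‖ ν) is finite and satisfies KL(s·μ₁ + (1−s)·μ₂ ‖ ν) ≥ s·KL(μ₁‖ν) + (1−s)·KL(μ₂‖ν) + s·log s + (1−s)·log(1−s). -/
open MeasureTheory ProbabilityTheory
open scoped ENNReal NNReal Classical

lemma aux_neg_one_le_mul_log {x : ℝ} (hx : 0 ≤ x) : -1 ≤ x * Real.log x := by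
  rcases hx.eq_or_lt with h | h
  · simp [← h]
  · have h1 : Real.log x⁻¹ ≤ x⁻¹ - 1 := Real.log_le_sub_one_of_pos (inv_pos.2 h)
    rw [Real.log_inv] at h1
    have h2 : x * (1 - x⁻¹) ≤ x * Real.log x :=
      mul_le_mul_of_nonneg_left (by linarith) h.le
    have h3 : x * (1 - x⁻¹) = x - 1 := by field_simp
    linarith

lemma integral_llr_nonneg {X : Type*} [MeasurableSpace X] (μ ν : Measure X)
    [IsProbabilityMeasure μ] [IsProbabilityMeasure ν] (hμν : μ ≪ ν)
    (hint : Integrable (llr μ ν) μ) : 0 ≤ ∫ x, llr μ ν x ∂μ := by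
  set r : X → ℝ := fun x => (μ.rnDeriv ν x).toReal with hr
  have hmr : Measurable r := (Measure.measurable_rnDeriv μ ν).ennreal_toReal
  have hbound : ∀ x, r x * (r x)⁻¹ ≤ 1 := by
    intro x
    rcases eq_or_ne (r x) 0 with h | h
    · simp [h]
    · rw [mul_inv_cancel₀ h]
  have h1 : Integrable (fun x => (r x)⁻¹) μ := by
    rw [← integrable_rnDeriv_smul_iff hμν]
    refine Integrable.mono' (integrable_const 1) ((hmr.smul hmr.inv).aestronglyMeasurable) ?_
    refine Filter.Eventually.of_forall fun x => ?_
    rw [Real.norm_eq_abs, smul_eq_mul, abs_of_nonneg (by positivity)]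
    exact hbound x
  have h2 : ∫ x, (r x)⁻¹ ∂μ ≤ 1 := by
    rw [← integral_rnDeriv_smul hμν]
    calc ∫ x, r x • (r x)⁻¹ ∂ν ≤ ∫ _, (1 : ℝ) ∂ν := by
          refine integral_mono ?_ (integrable_const 1) fun x => by
            simpa [smul_eq_mul] using hbound x
          · refine Integrable.mono' (integrable_const 1)
              ((hmr.smul hmr.inv).aestronglyMeasurable) ?_
            refine Filter.Eventually.of_forall fun x => ?_
            rw [Real.norm_eq_abs, smul_eq_mul, abs_of_nonneg (by positivity)]
            exact hbound x
      _ = 1 := by simp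
  have h3 : ∀ᵐ x ∂μ, -llr μ ν x ≤ (r x)⁻¹ - 1 := by
    have hpos := Measure.rnDeriv_pos hμν
    have hfin := (Measure.rnDeriv_lt_top μ ν).filter_mono hμν.ae_le
    filter_upwards [hpos, hfin] with x hx hx'
    have hrx : 0 < r x := ENNReal.toReal_pos hx.ne' hx'.ne
    have := Real.log_le_sub_one_of_pos (inv_pos.2 hrx)
    rw [Real.log_inv] at this
    simpa [llr] using this
  have h4 : ∫ x, -llr μ ν x ∂μ ≤ ∫ x, ((r x)⁻¹ - 1) ∂μ :=
    integral_mono_ae hint.neg (h1.sub (integrable_const 1)) h3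
  rw [integral_neg, integral_sub h1 (integrable_const 1)] at h4
  simp only [integral_const, probReal_univ, smul_eq_mul, one_mul] at h4
  linarith


/-- **Reverse convexity of relative entropy for mixtures.** If `KL(μ₁‖ν)` and `KL(μ₂‖ν)` are
finite and `s ∈ (0,1)`, then `KL(s·μ₁ + (1−s)·μ₂ ‖ ν)` is finite and
`KL(s·μ₁ + (1−s)·μ₂ ‖ ν) ≥ s·KL(μ₁‖ν) + (1−s)·KL(μ₂‖ν) + s·log s + (1−s)·log(1−s)`. -/
theorem klDiv_mixture_ge
    {X : Type*} [MeasurableSpace X] (μ₁ μ₂ ν : Measure X)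
    [IsProbabilityMeasure μ₁] [IsProbabilityMeasure μ₂] [IsProbabilityMeasure ν]
    (s : ℝ) (hs : s ∈ Set.Ioo (0 : ℝ) 1)
    (h₁ : klDiv μ₁ ν ≠ ⊤) (h₂ : klDiv μ₂ ν ≠ ⊤) :
    klDiv (ENNReal.ofReal s • μ₁ + ENNReal.ofReal (1 - s) • μ₂) ν ≠ ⊤ ∧
      s * (klDiv μ₁ ν).toReal + (1 - s) * (klDiv μ₂ ν).toReal
          + s * Real.log s + (1 - s) * Real.log (1 - s)
        ≤ (klDiv (ENNReal.ofReal s • μ₁ + ENNReal.ofReal (1 - s) • μ₂) ν).toReal := by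
  obtain ⟨hs0, hs1⟩ := hs
  have ht0 : (0 : ℝ) < 1 - s := by linarith
  set a : ℝ≥0∞ := ENNReal.ofReal s with ha_def
  set b : ℝ≥0∞ := ENNReal.ofReal (1 - s) with hb_def
  have ha0 : a ≠ 0 := ne_of_gt (ENNReal.ofReal_pos.2 hs0)
  have hb0 : b ≠ 0 := ne_of_gt (ENNReal.ofReal_pos.2 ht0)
  have ha_top : a ≠ ⊤ := ENNReal.ofReal_ne_top
  have hb_top : b ≠ ⊤ := ENNReal.ofReal_ne_top
  have ha_toReal : a.toReal = s := ENNReal.toReal_ofReal hs0.le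
  have hb_toReal : b.toReal = 1 - s := ENNReal.toReal_ofReal ht0.le
  set μ : Measure X := a • μ₁ + b • μ₂ with hμ_def
  -- extract conditions from finiteness hypotheses
  have hc₁ : μ₁ ≪ ν ∧ Integrable (fun x => Real.log ((μ₁.rnDeriv ν) x).toReal) μ₁ := by
    by_contra h; rw [klDiv, if_neg h] at h₁; exact h₁ rfl
  have hc₂ : μ₂ ≪ ν ∧ Integrable (fun x => Real.log ((μ₂.rnDeriv ν) x).toReal) μ₂ := by
    by_contra h; rw [klDiv, if_neg h] at h₂; exact h₂ rfl
  have hl₁ : Integrable (llr μ₁ ν) μ₁ := hc₁.2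
  have hl₂ : Integrable (llr μ₂ ν) μ₂ := hc₂.2
  haveI hfin1 : IsFiniteMeasure (a • μ₁) :=
    ⟨by rw [Measure.smul_apply, smul_eq_mul, measure_univ, mul_one]; exact ha_top.lt_top⟩
  haveI hfin2 : IsFiniteMeasure (b • μ₂) :=
    ⟨by rw [Measure.smul_apply, smul_eq_mul, measure_univ, mul_one]; exact hb_top.lt_top⟩
  haveI hμ_prob : IsProbabilityMeasure μ := by
    constructor
    rw [hμ_def, Measure.add_apply, Measure.smul_apply, Measure.smul_apply, smul_eq_mul,
      smul_eq_mul, measure_univ, measure_univ, mul_one, mul_one, ha_def, hb_def,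
      ← ENNReal.ofReal_add hs0.le ht0.le]
    norm_num
  have hμν : μ ≪ ν := by
    refine Measure.AbsolutelyContinuous.mk fun E hE h0 => ?_
    rw [hμ_def, Measure.add_apply, Measure.smul_apply, Measure.smul_apply,
      hc₁.1 h0, hc₂.1 h0]
    simp
  -- densities
  set r₁ : X → ℝ := fun x => (μ₁.rnDeriv ν x).toReal with hr₁
  set r₂ : X → ℝ := fun x => (μ₂.rnDeriv ν x).toReal with hr₂
  set F : X → ℝ := fun x => s * r₁ x + (1 - s) * r₂ x with hF
  have hmr₁ : Measurable r₁ := (Measure.measurable_rnDeriv μ₁ ν).ennreal_toReal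
  have hmr₂ : Measurable r₂ := (Measure.measurable_rnDeriv μ₂ ν).ennreal_toReal
  have hmF : Measurable F := (hmr₁.const_mul s).add (hmr₂.const_mul (1 - s))
  have hg : μ.rnDeriv ν =ᵐ[ν] fun x => a * μ₁.rnDeriv ν x + b * μ₂.rnDeriv ν x := by
    have h1 := Measure.rnDeriv_add (a • μ₁) (b • μ₂) ν
    have h2 := Measure.rnDeriv_smul_left_of_ne_top μ₁ ν ha_top
    have h3 := Measure.rnDeriv_smul_left_of_ne_top μ₂ ν hb_top
    filter_upwards [h1, h2, h3] with x e1 e2 e3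
    rw [hμ_def, e1, Pi.add_apply, e2, e3, Pi.smul_apply, Pi.smul_apply, smul_eq_mul, smul_eq_mul]
  have hGae : (fun x => (μ.rnDeriv ν x).toReal) =ᵐ[ν] F := by
    filter_upwards [hg, Measure.rnDeriv_ne_top μ₁ ν, Measure.rnDeriv_ne_top μ₂ ν]
      with x hx h1 h2
    rw [hx, ENNReal.toReal_add (ENNReal.mul_ne_top ha_top h1) (ENNReal.mul_ne_top hb_top h2),
      ENNReal.toReal_mul, ENNReal.toReal_mul, ha_toReal, hb_toReal]
  -- integrability of rᵢ * log rᵢ over ν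
  have hi₁ : Integrable (fun x => r₁ x * Real.log (r₁ x)) ν := by
    have := (integrable_rnDeriv_smul_iff hc₁.1).mpr hl₁
    simpa [llr, smul_eq_mul] using this
  have hi₂ : Integrable (fun x => r₂ x * Real.log (r₂ x)) ν := by
    have := (integrable_rnDeriv_smul_iff hc₂.1).mpr hl₂
    simpa [llr, smul_eq_mul] using this
  -- convexity bound
  have hconv : ∀ x, F x * Real.log (F x)
      ≤ s * (r₁ x * Real.log (r₁ x)) + (1 - s) * (r₂ x * Real.log (r₂ x)) := by
    intro x
    have hx1 : r₁ x ∈ Set.Ici (0 : ℝ) := Set.mem_Ici.2 ENNReal.toReal_nonneg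
    have hx2 : r₂ x ∈ Set.Ici (0 : ℝ) := Set.mem_Ici.2 ENNReal.toReal_nonneg
    have := Real.convexOn_mul_log.2 hx1 hx2 hs0.le ht0.le (by ring)
    simpa [smul_eq_mul] using this
  -- integrability of F * log F over ν
  have hiF : Integrable (fun x => F x * Real.log (F x)) ν := by
    refine Integrable.mono'
      (((hi₁.const_mul s).add (hi₂.const_mul (1 - s))).abs.add (integrable_const 1))
      ((hmF.mul (Real.measurable_log.comp hmF)).aestronglyMeasurable) ?_
    refine Filter.Eventually.of_forall fun x => ?_
    have hlow : -1 ≤ F x * Real.log (F x) := aux_neg_one_le_mul_log (by positivity)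
    have hup := hconv x
    rw [Real.norm_eq_abs, abs_le]
    constructor
    · have := abs_nonneg (s * (r₁ x * Real.log (r₁ x)) + (1 - s) * (r₂ x * Real.log (r₂ x)))
      simp only [Pi.add_apply, Pi.abs_apply]
      linarith
    · have := le_abs_self (s * (r₁ x * Real.log (r₁ x)) + (1 - s) * (r₂ x * Real.log (r₂ x)))
      simp only [Pi.add_apply, Pi.abs_apply]
      linarith
  have hiG : Integrable (fun x => (μ.rnDeriv ν x).toReal * Real.log (μ.rnDeriv ν x).toReal) ν := by
    refine hiF.congr ?_
    filter_upwards [hGae] with x hx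
    rw [hx]
  -- llr μ ν is μ-integrable
  have hint_μ : Integrable (llr μ ν) μ := by
    rw [llr_def, ← integrable_rnDeriv_smul_iff hμν]
    simpa [smul_eq_mul] using hiG
  have hcond : μ ≪ ν ∧ Integrable (fun x => Real.log (μ.rnDeriv ν x).toReal) μ := ⟨hμν, hint_μ⟩
  refine ⟨by rw [klDiv, if_pos hcond]; exact ENNReal.ofReal_ne_top, ?_⟩
  -- integrability of llr μ ν w.r.t. μ₁ and μ₂
  have hint₁ : Integrable (llr μ ν) μ₁ := by
    have := hint_μ.mono_measure (Measure.le_add_right (le_refl (a • μ₁)))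
    rwa [integrable_smul_measure ha0 ha_top] at this
  have hint₂ : Integrable (llr μ ν) μ₂ := by
    have := hint_μ.mono_measure (Measure.le_add_left (le_refl (b • μ₂)))
    rwa [integrable_smul_measure hb0 hb_top] at this
  -- a.e. lower bounds
  have hae₁ : ∀ᵐ x ∂μ₁, Real.log s + llr μ₁ ν x ≤ llr μ ν x := by
    have hGae₁ : (fun x => (μ.rnDeriv ν x).toReal) =ᵐ[μ₁] F := hGae.filter_mono hc₁.1.ae_le
    have hpos := Measure.rnDeriv_pos hc₁.1
    have hfin := (Measure.rnDeriv_lt_top μ₁ ν).filter_mono hc₁.1.ae_le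
    filter_upwards [hGae₁, hpos, hfin] with x hx hp hf
    have hr1pos : 0 < r₁ x := ENNReal.toReal_pos hp.ne' hf.ne
    have hF_ge : s * r₁ x ≤ F x := by
      have : 0 ≤ (1 - s) * r₂ x := by positivity
      simp only [hF]; linarith
    have hFpos : 0 < s * r₁ x := by positivity
    calc Real.log s + llr μ₁ ν x = Real.log (s * r₁ x) := by
          rw [Real.log_mul hs0.ne' hr1pos.ne']; rfl
      _ ≤ Real.log (F x) := Real.log_le_log hFpos hF_ge
      _ = llr μ ν x := by rw [llr, hx]
  have hae₂ : ∀ᵐ x ∂μ₂, Real.log (1 - s) + llr μ₂ ν x ≤ llr μ ν x := by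
    have hGae₂ : (fun x => (μ.rnDeriv ν x).toReal) =ᵐ[μ₂] F := hGae.filter_mono hc₂.1.ae_le
    have hpos := Measure.rnDeriv_pos hc₂.1
    have hfin := (Measure.rnDeriv_lt_top μ₂ ν).filter_mono hc₂.1.ae_le
    filter_upwards [hGae₂, hpos, hfin] with x hx hp hf
    have hr2pos : 0 < r₂ x := ENNReal.toReal_pos hp.ne' hf.ne
    have hF_ge : (1 - s) * r₂ x ≤ F x := by
      have : 0 ≤ s * r₁ x := by positivity
      simp only [hF]; linarith
    have hFpos : 0 < (1 - s) * r₂ x := by positivity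
    calc Real.log (1 - s) + llr μ₂ ν x = Real.log ((1 - s) * r₂ x) := by
          rw [Real.log_mul ht0.ne' hr2pos.ne']; rfl
      _ ≤ Real.log (F x) := Real.log_le_log hFpos hF_ge
      _ = llr μ ν x := by rw [llr, hx]
  -- integral lower bounds
  have hI₁ : Real.log s + ∫ x, llr μ₁ ν x ∂μ₁ ≤ ∫ x, llr μ ν x ∂μ₁ := by
    have h : ∫ x, (Real.log s + llr μ₁ ν x) ∂μ₁ ≤ ∫ x, llr μ ν x ∂μ₁ :=
      integral_mono_ae ((integrable_const _).add hl₁) hint₁ hae₁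
    rwa [integral_add (integrable_const _) hl₁, integral_const, probReal_univ,
      smul_eq_mul, one_mul] at h
  have hI₂ : Real.log (1 - s) + ∫ x, llr μ₂ ν x ∂μ₂ ≤ ∫ x, llr μ ν x ∂μ₂ := by
    have h : ∫ x, (Real.log (1 - s) + llr μ₂ ν x) ∂μ₂ ≤ ∫ x, llr μ ν x ∂μ₂ :=
      integral_mono_ae ((integrable_const _).add hl₂) hint₂ hae₂
    rwa [integral_add (integrable_const _) hl₂, integral_const, probReal_univ,
      smul_eq_mul, one_mul] at h
  -- split the integral over μ
  have hsplit : ∫ x, llr μ ν x ∂μ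
      = s * ∫ x, llr μ ν x ∂μ₁ + (1 - s) * ∫ x, llr μ ν x ∂μ₂ := by
    rw [hμ_def, integral_add_measure
      (hint_μ.mono_measure (Measure.le_add_right (le_refl (a • μ₁))))
      (hint_μ.mono_measure (Measure.le_add_left (le_refl (b • μ₂)))),
      integral_smul_measure, integral_smul_measure, ha_toReal, hb_toReal,
      smul_eq_mul, smul_eq_mul]
  -- toReal values of klDiv
  have hK : (klDiv μ ν).toReal = ∫ x, llr μ ν x ∂μ := by
    rw [klDiv, if_pos hcond]
    exact ENNReal.toReal_ofReal (integral_llr_nonneg μ ν hμν hint_μ)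
  have hK₁ : (klDiv μ₁ ν).toReal = ∫ x, llr μ₁ ν x ∂μ₁ := by
    rw [klDiv, if_pos hc₁]
    exact ENNReal.toReal_ofReal (integral_llr_nonneg μ₁ ν hc₁.1 hl₁)
  have hK₂ : (klDiv μ₂ ν).toReal = ∫ x, llr μ₂ ν x ∂μ₂ := by
    rw [klDiv, if_pos hc₂]
    exact ENNReal.toReal_ofReal (integral_llr_nonneg μ₂ ν hc₂.1 hl₂)
  rw [hK, hK₁, hK₂, hsplit]
  nlinarith [mul_le_mul_of_nonneg_left hI₁ hs0.le, mul_le_mul_of_nonneg_left hI₂ ht0.le]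
end

section
/- Let μ and ν be probability measures on a measurable space with KL(μ‖ν) < ∞, let A be a measurable set and let M ≥ 1. Then μ(A)·log M ≤ KL(μ‖ν) + log(1 + (M−1)·ν(A)). -/
open MeasureTheory ProbabilityTheory
open scoped ENNReal NNReal Classical

/-- **Entropy bound for event probabilities.** For probability measures `μ, ν` with
`KL(μ‖ν) < ∞`, a measurable set `A` and `M ≥ 1`:
`μ(A)·log M ≤ KL(μ‖ν) + log(1 + (M−1)·ν(A))`. -/
theorem measure_mul_log_le_klDiv_add_log
    {X : Type*} [MeasurableSpace X] (μ ν : Measure X)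
    [IsProbabilityMeasure μ] [IsProbabilityMeasure ν]
    (h : klDiv μ ν ≠ ⊤) (A : Set X) (hA : MeasurableSet A) (M : ℝ) (hM : 1 ≤ M) :
    (μ A).toReal * Real.log M ≤
      (klDiv μ ν).toReal + Real.log (1 + (M - 1) * (ν A).toReal) := by
  rw [klDiv] at h ⊢
  split_ifs at h ⊢ with hc
  swap
  · exact absurd rfl h
  obtain ⟨hμν, hint⟩ := hc
  have hM0 : (0:ℝ) < M := lt_of_lt_of_le one_pos hM
  set L : X → ℝ := fun x => Real.log (μ.rnDeriv ν x).toReal with hLdef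
  set q : ℝ := (ν A).toReal with hqdef
  have hq0 : 0 ≤ q := ENNReal.toReal_nonneg
  have hq1 : q ≤ 1 := by
    rw [hqdef]
    exact ENNReal.toReal_le_of_le_ofReal one_pos.le (by simpa using prob_le_one)
  set Z : ℝ := 1 + (M - 1) * q with hZdef
  have hZ1 : (1:ℝ) ≤ Z := by nlinarith
  have hZpos : (0:ℝ) < Z := lt_of_lt_of_le one_pos hZ1
  set f : X → ℝ := A.indicator fun _ => Real.log M with hfdef
  have hfmeas : Measurable f := measurable_const.indicator hA
  set g : X → ℝ := fun x => Real.exp (f x) / (μ.rnDeriv ν x).toReal with hgdef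
  have hgmeas : Measurable g :=
    (hfmeas.exp).div (Measure.measurable_rnDeriv μ ν).ennreal_toReal
  have hg0 : ∀ x, 0 ≤ g x := fun x => div_nonneg (Real.exp_pos _).le ENNReal.toReal_nonneg
  -- lintegral bound
  have hexp : ∫⁻ x, ENNReal.ofReal (Real.exp (f x)) ∂ν = ENNReal.ofReal M * ν A + ν Aᶜ := by
    have h1 : ∫⁻ x in A, ENNReal.ofReal (Real.exp (f x)) ∂ν = ENNReal.ofReal M * ν A := by
      calc ∫⁻ x in A, ENNReal.ofReal (Real.exp (f x)) ∂ν
          = ∫⁻ _ in A, ENNReal.ofReal M ∂ν := by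
            refine setLIntegral_congr_fun hA (fun x hx => ?_)
            simp [hfdef, Set.indicator_of_mem hx, Real.exp_log hM0]
        _ = ENNReal.ofReal M * ν A := by simp [mul_comm]
    have h2 : ∫⁻ x in Aᶜ, ENNReal.ofReal (Real.exp (f x)) ∂ν = ν Aᶜ := by
      calc ∫⁻ x in Aᶜ, ENNReal.ofReal (Real.exp (f x)) ∂ν
          = ∫⁻ _ in Aᶜ, 1 ∂ν := by
            refine setLIntegral_congr_fun hA.compl (fun x hx => ?_)
            simp [hfdef, Set.indicator_of_notMem hx]
        _ = ν Aᶜ := by simp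
    rw [← lintegral_add_compl (fun x => ENNReal.ofReal (Real.exp (f x))) hA, h1, h2]
  have hbound : ∫⁻ x, ENNReal.ofReal (g x) ∂μ ≤ ENNReal.ofReal M * ν A + ν Aᶜ := by
    rw [← MeasureTheory.lintegral_rnDeriv_mul hμν (by
      exact (ENNReal.measurable_ofReal.comp hgmeas).aemeasurable)]
    rw [← hexp]
    refine lintegral_mono_ae ?_
    filter_upwards [Measure.rnDeriv_lt_top μ ν] with x hx
    rcases eq_or_ne (μ.rnDeriv ν x) 0 with h0 | h0
    · simp [h0]
    · have ht : 0 < (μ.rnDeriv ν x).toReal := ENNReal.toReal_pos h0 hx.ne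
      rw [show μ.rnDeriv ν x = ENNReal.ofReal (μ.rnDeriv ν x).toReal by
            rw [ENNReal.ofReal_toReal hx.ne],
          ← ENNReal.ofReal_mul ENNReal.toReal_nonneg]
      rw [hgdef]
      simp only
      rw [mul_div_cancel₀ _ ht.ne']
  have hlt : ENNReal.ofReal M * ν A + ν Aᶜ < ⊤ := by
    exact ENNReal.add_lt_top.2 ⟨ENNReal.mul_lt_top ENNReal.ofReal_lt_top (measure_lt_top _ _),
      measure_lt_top _ _⟩
  have hgint : Integrable g μ := by
    refine ⟨hgmeas.aestronglyMeasurable, ?_⟩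
    rw [hasFiniteIntegral_iff_ofReal (ae_of_all _ hg0)]
    exact lt_of_le_of_lt hbound hlt
  have hInt_g : ∫ x, g x ∂μ ≤ Z := by
    rw [integral_eq_lintegral_of_nonneg_ae (ae_of_all _ hg0) hgmeas.aestronglyMeasurable]
    have := ENNReal.toReal_mono hlt.ne hbound
    refine le_trans this ?_
    rw [ENNReal.toReal_add (ENNReal.mul_lt_top ENNReal.ofReal_lt_top (measure_lt_top _ _)).ne
        (measure_lt_top _ _).ne, ENNReal.toReal_mul, ENNReal.toReal_ofReal hM0.le]
    have hcompl : (ν Aᶜ).toReal = 1 - q := by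
      rw [prob_compl_eq_one_sub hA, ENNReal.toReal_sub_of_le prob_le_one ENNReal.one_ne_top]
      simp [hqdef]
    rw [hcompl, hZdef]
    ring_nf
    nlinarith [hq0]
  -- pointwise Gibbs inequality
  have hae : ∀ᵐ x ∂μ, f x - L x ≤ g x / Z - 1 + Real.log Z := by
    filter_upwards [Measure.rnDeriv_pos hμν, hμν.ae_le (Measure.rnDeriv_lt_top μ ν)]
      with x hpos hlt
    have hρ : 0 < (μ.rnDeriv ν x).toReal := ENNReal.toReal_pos hpos.ne' hlt.ne
    have hgx : 0 < g x := div_pos (Real.exp_pos _) hρ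
    have h1 : f x - L x = Real.log (g x) := by
      rw [hgdef]; simp only
      rw [Real.log_div (Real.exp_ne_zero _) hρ.ne', Real.log_exp, hLdef]
    rw [h1]
    have h2 : Real.log (g x / Z) ≤ g x / Z - 1 :=
      Real.log_le_sub_one_of_pos (div_pos hgx hZpos)
    rw [Real.log_div hgx.ne' hZpos.ne'] at h2
    linarith
  have hfint : Integrable f μ := (integrable_const _).indicator hA
  have hsub : Integrable (fun x => f x - L x) μ := hfint.sub hint
  have hi1 : Integrable (fun x => g x / Z - 1) μ :=
    (hgint.div_const Z).sub (integrable_const 1)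
  have hrhs : Integrable (fun x => g x / Z - 1 + Real.log Z) μ :=
    hi1.add (integrable_const _)
  have hmono := integral_mono_ae hsub hrhs hae
  rw [integral_sub hfint hint] at hmono
  have hrhsval : ∫ x, (g x / Z - 1 + Real.log Z) ∂μ ≤ Real.log Z := by
    rw [integral_add hi1 (integrable_const _),
      integral_sub (hgint.div_const Z) (integrable_const 1), integral_div, integral_const,
      integral_const]
    simp only [measureReal_def, measure_univ, ENNReal.toReal_one, one_smul, smul_eq_mul, one_mul]
    have : (∫ x, g x ∂μ) / Z ≤ 1 := (div_le_one hZpos).2 hInt_g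
    linarith
  have hfval : ∫ x, f x ∂μ = (μ A).toReal * Real.log M := by
    rw [hfdef, integral_indicator_const _ hA]; simp [mul_comm, measureReal_def]
  have hKL : ∫ x, L x ∂μ ≤ (ENNReal.ofReal (∫ x, L x ∂μ)).toReal := by
    rcases le_or_gt 0 (∫ x, L x ∂μ) with h0 | h0
    · rw [ENNReal.toReal_ofReal h0]
    · exact le_trans h0.le ENNReal.toReal_nonneg
  have : ∫ x, f x ∂μ ≤ ∫ x, L x ∂μ + Real.log Z := by linarith
  rw [hfval] at this
  linarith
end

section
/- Fix d ≥ 1, β > 0, M > 0, and a measurable bounded function v : ℝ^d → [0,∞) whose support is contained in the closed Euclidean ball of radius r₀ > 0 around the origin; set 𝔯 = M + r₀. Then there is a constant C ∈ (0,∞), depending only on d, β, sup v and r₀, with the following property: for all finite families (f_i)_{i∈I} and (g_j)_{j∈J} of continuous paths [0,β] → ℝ^d satisfying ‖f_i(t) − f_i(0)‖ ≤ M and ‖g_j(t) − g_j(0)‖ ≤ M for all t ∈ [0,β] and all i ∈ I, j ∈ J, one has ∑_{i∈I} ∑_{j∈J} ∫₀^β v(f_i(s) − g_j(s)) ds ≤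 C · (∫_{ℝ^d} N(x)² dx)^{1/2} · (∫_{ℝ^d} N'(x)² dx)^{1/2}, where N(x) = #{i ∈ I : ‖f_i(0) − x‖ ≤ 𝔯} and N'(x) = #{j ∈ J : ‖g_j(0) − x‖ ≤ 𝔯}. -/
open MeasureTheory
open scoped ENNReal NNReal

/-- **Estimating interaction (Cauchy–Schwarz bound).** Let `v : ℝ^d → [0,∞)` be measurable and
bounded, with support in the closed ball of radius `r₀` around the origin. Then there is a
constant `C > 0` (depending only on `d`, `β`, `sup v` and `r₀`, in particular not on `M`)
such that for every `M > 0` and all finite families of continuous paths `[0,β] → ℝ^d` whose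
legs have spread at most `M`, the total pairwise interaction
`∑_i ∑_j ∫₀^β v(f i s − g j s) ds` is bounded by
`C · (∫ N(x)² dx)^{1/2} · (∫ N'(x)² dx)^{1/2}`, where `N(x)` (resp. `N'(x)`) counts the paths
of the first (resp. second) family starting within distance `𝔯 = M + r₀` of `x`. -/
theorem interaction_cauchy_schwarz_estimate
    (d : ℕ) (hd : 1 ≤ d) (β : ℝ) (hβ : 0 < β)
    (v : EuclideanSpace ℝ (Fin d) → ℝ) (hv_meas : Measurable v)
    (hv_nonneg : ∀ x, 0 ≤ v x)
    (Cv : ℝ) (hv_bdd : ∀ x, v x ≤ Cv)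
    (r₀ : ℝ) (hr₀ : 0 < r₀)
    (hv_supp : ∀ x : EuclideanSpace ℝ (Fin d), r₀ < ‖x‖ → v x = 0) :
    ∃ C : ℝ, 0 < C ∧
      ∀ M : ℝ, 0 < M →
        ∀ (m n : ℕ) (f : Fin m → ℝ → EuclideanSpace ℝ (Fin d))
          (g : Fin n → ℝ → EuclideanSpace ℝ (Fin d)),
          (∀ i, ContinuousOn (f i) (Set.Icc 0 β)) →
          (∀ j, ContinuousOn (g j) (Set.Icc 0 β)) →
          (∀ i, ∀ t ∈ Set.Icc (0 : ℝ) β, ‖f i t - f i 0‖ ≤ M) →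
          (∀ j, ∀ t ∈ Set.Icc (0 : ℝ) β, ‖g j t - g j 0‖ ≤ M) →
          ∑ i, ∑ j, ∫ s in (0 : ℝ)..β, v (f i s - g j s) ≤
            C * Real.sqrt (∫ x : EuclideanSpace ℝ (Fin d),
                  ((Nat.card {i : Fin m // ‖f i 0 - x‖ ≤ M + r₀} : ℝ) ^ 2)) *
              Real.sqrt (∫ x : EuclideanSpace ℝ (Fin d),
                  ((Nat.card {j : Fin n // ‖g j 0 - x‖ ≤ M + r₀} : ℝ) ^ 2)) := by
  classical
  have hCv0 : 0 ≤ Cv := le_trans (hv_nonneg 0) (hv_bdd 0)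
  set V₀ : ℝ :=
    (volume (Metric.closedBall (0 : EuclideanSpace ℝ (Fin d)) (r₀ / 2))).toReal with hV₀def
  have hV₀fin : volume (Metric.closedBall (0 : EuclideanSpace ℝ (Fin d)) (r₀ / 2)) ≠ ⊤ :=
    measure_closedBall_lt_top.ne
  have hV₀pos : 0 < V₀ :=
    ENNReal.toReal_pos (Metric.measure_closedBall_pos volume 0 (by linarith)).ne' hV₀fin
  refine ⟨(Cv + 1) * β / V₀, div_pos (mul_pos (by linarith) hβ) hV₀pos, ?_⟩
  intro M hM m n f g hfc hgc hfs hgs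
  set 𝔯 : ℝ := M + r₀ with h𝔯
  set Bf : Fin m → Set (EuclideanSpace ℝ (Fin d)) :=
    fun i => Metric.closedBall (f i 0) 𝔯 with hBf
  set Bg : Fin n → Set (EuclideanSpace ℝ (Fin d)) :=
    fun j => Metric.closedBall (g j 0) 𝔯 with hBg
  set χf : Fin m → EuclideanSpace ℝ (Fin d) → ℝ :=
    fun i => (Bf i).indicator (fun _ => (1 : ℝ)) with hχf
  set χg : Fin n → EuclideanSpace ℝ (Fin d) → ℝ :=
    fun j => (Bg j).indicator (fun _ => (1 : ℝ)) with hχg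
  have h𝔯pos : 0 < 𝔯 := by positivity
  have hBfin : ∀ i, volume (Bf i) ≠ ⊤ := fun i => measure_closedBall_lt_top.ne
  have hBgin : ∀ j, volume (Bg j) ≠ ⊤ := fun j => measure_closedBall_lt_top.ne
  have hBfm : ∀ i, MeasurableSet (Bf i) := fun i => Metric.isClosed_closedBall.measurableSet
  have hBgm : ∀ j, MeasurableSet (Bg j) := fun j => Metric.isClosed_closedBall.measurableSet
  -- the interaction of a single pair
  have hpair : ∀ i j, ∫ s in (0 : ℝ)..β, v (f i s - g j s) ≤
      Cv * β / V₀ * (volume (Bf i ∩ Bg j)).toReal := by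
    intro i j
    by_cases hclose : ‖f i 0 - g j 0‖ ≤ 2 * M + r₀
    · -- crude bound on the integral
      have h1 : ∫ s in (0 : ℝ)..β, v (f i s - g j s) ≤ Cv * β := by
        have := intervalIntegral.norm_integral_le_of_norm_le_const
          (C := Cv) (a := (0 : ℝ)) (b := β) (f := fun s => v (f i s - g j s))
          (fun s _ => by rw [Real.norm_of_nonneg (hv_nonneg _)]; exact hv_bdd _)
        rw [sub_zero, abs_of_pos hβ] at this
        exact le_trans (le_abs_self _) this
      -- the two balls overlap on a set of measure at least V₀
      set c : EuclideanSpace ℝ (Fin d) := midpoint ℝ (f i 0) (g j 0) with hc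
      have hdistf : dist c (f i 0) = ‖f i 0 - g j 0‖ / 2 := by
        rw [dist_midpoint_left, dist_eq_norm, Real.norm_ofNat]; ring
      have hdistg : dist c (g j 0) = ‖f i 0 - g j 0‖ / 2 := by
        rw [dist_midpoint_right, dist_eq_norm, Real.norm_ofNat]; ring
      have hsub : Metric.closedBall c (r₀ / 2) ⊆ Bf i ∩ Bg j := by
        intro x hx
        rw [Metric.mem_closedBall] at hx
        constructor
        · rw [hBf]; simp only [Metric.mem_closedBall]
          calc dist x (f i 0) ≤ dist x c + dist c (f i 0) := dist_triangle _ _ _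
            _ ≤ r₀ / 2 + ‖f i 0 - g j 0‖ / 2 := by rw [hdistf]; linarith
            _ ≤ 𝔯 := by rw [h𝔯]; linarith
        · rw [hBg]; simp only [Metric.mem_closedBall]
          calc dist x (g j 0) ≤ dist x c + dist c (g j 0) := dist_triangle _ _ _
            _ ≤ r₀ / 2 + ‖f i 0 - g j 0‖ / 2 := by rw [hdistg]; linarith
            _ ≤ 𝔯 := by rw [h𝔯]; linarith
      have hV₀le : V₀ ≤ (volume (Bf i ∩ Bg j)).toReal := by
        have h2 : volume (Metric.closedBall c (r₀ / 2)) ≤ volume (Bf i ∩ Bg j) :=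
          measure_mono hsub
        have h3 : volume (Metric.closedBall c (r₀ / 2)) =
            volume (Metric.closedBall (0 : EuclideanSpace ℝ (Fin d)) (r₀ / 2)) :=
          Measure.addHaar_closedBall_center volume c (r₀ / 2)
        have h4 : volume (Bf i ∩ Bg j) ≠ ⊤ :=
          (lt_of_le_of_lt (measure_mono Set.inter_subset_left) measure_closedBall_lt_top).ne
        rw [hV₀def, ← h3]
        exact ENNReal.toReal_le_toReal (h3 ▸ hV₀fin) h4 |>.mpr h2
      calc ∫ s in (0 : ℝ)..β, v (f i s - g j s) ≤ Cv * β := h1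
        _ = Cv * β / V₀ * V₀ := by field_simp
        _ ≤ Cv * β / V₀ * (volume (Bf i ∩ Bg j)).toReal := by
            apply mul_le_mul_of_nonneg_left hV₀le
            positivity
    · -- the paths never get within range of each other
      push_neg at hclose
      have hzero : Set.EqOn (fun s => v (f i s - g j s)) (fun _ => (0 : ℝ))
          (Set.uIcc (0 : ℝ) β) := by
        intro s hs
        rw [Set.uIcc_of_le hβ.le] at hs
        apply hv_supp
        have h1 := hfs i s hs
        have h2 := hgs j s hs
        have h3 : dist (f i 0) (g j 0) ≤
            dist (f i 0) (f i s) + dist (f i s) (g j s) + dist (g j s) (g j 0) :=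
          dist_triangle4 _ _ _ _
        rw [dist_eq_norm, dist_eq_norm, dist_eq_norm, dist_eq_norm] at h3
        rw [norm_sub_rev (f i 0) (f i s)] at h3
        linarith
      rw [intervalIntegral.integral_congr hzero]
      simp only [intervalIntegral.integral_const, smul_zero]
      positivity
  -- product of indicators
  have hint : ∀ i j, Integrable (fun x => χf i x * χg j x) volume := by
    intro i j
    have heq : (fun x => χf i x * χg j x) =
        (Bf i ∩ Bg j).indicator (fun _ => (1 : ℝ)) := by
      funext x
      rw [hχf, hχg]
      simp only [← Set.inter_indicator_mul]
      simp [Set.indicator_apply]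
    rw [heq]
    exact (integrable_indicator_iff ((hBfm i).inter (hBgm j))).mpr
      (integrableOn_const
        (lt_of_le_of_lt (measure_mono Set.inter_subset_left) measure_closedBall_lt_top).ne)
  have hprod : ∀ i j, ∫ x, χf i x * χg j x = (volume (Bf i ∩ Bg j)).toReal := by
    intro i j
    have heq : (fun x => χf i x * χg j x) =
        (Bf i ∩ Bg j).indicator (fun _ => (1 : ℝ)) := by
      funext x
      rw [hχf, hχg]
      simp only [← Set.inter_indicator_mul]
      simp [Set.indicator_apply]
    rw [heq, integral_indicator_const (1 : ℝ) ((hBfm i).inter (hBgm j)), smul_eq_mul, mul_one]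
    rfl
  set N : EuclideanSpace ℝ (Fin d) → ℝ := fun x => ∑ i, χf i x with hN
  set N' : EuclideanSpace ℝ (Fin d) → ℝ := fun x => ∑ j, χg j x with hN'
  have hkey : ∫ x, N x * N' x = ∑ i, ∑ j, (volume (Bf i ∩ Bg j)).toReal := by
    have h1 : ∀ x, N x * N' x = ∑ i, ∑ j, χf i x * χg j x := fun x => by
      rw [hN, hN', Finset.sum_mul_sum]
    simp_rw [h1]
    rw [integral_finset_sum _ (fun i _ => integrable_finset_sum _ (fun j _ => hint i j))]
    exact Finset.sum_congr rfl fun i _ => by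
      rw [integral_finset_sum _ (fun j _ => hint i j)]
      exact Finset.sum_congr rfl fun j _ => hprod i j
  -- membership in ℒ²
  have hmemf : MemLp N (ENNReal.ofReal 2) volume := by
    simp only [hN]
    apply memLp_finset_sum
    intro i _
    exact memLp_indicator_const _ (hBfm i) (1 : ℝ) (Or.inr (hBfin i))
  have hmemg : MemLp N' (ENNReal.ofReal 2) volume := by
    simp only [hN']
    apply memLp_finset_sum
    intro j _
    exact memLp_indicator_const _ (hBgm j) (1 : ℝ) (Or.inr (hBgin j))
  have hNnn : ∀ x, 0 ≤ N x := fun x =>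
    Finset.sum_nonneg fun i _ => Set.indicator_nonneg (fun _ _ => zero_le_one) x
  have hN'nn : ∀ x, 0 ≤ N' x := fun x =>
    Finset.sum_nonneg fun j _ => Set.indicator_nonneg (fun _ _ => zero_le_one) x
  have hCS : ∫ x, N x * N' x ≤
      Real.sqrt (∫ x, N x ^ 2) * Real.sqrt (∫ x, N' x ^ 2) := by
    have hpq : Real.HolderConjugate 2 2 := Real.HolderConjugate.two_two
    have := integral_mul_le_Lp_mul_Lq_of_nonneg hpq
      (Filter.Eventually.of_forall hNnn) (Filter.Eventually.of_forall hN'nn) hmemf hmemg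
    have e1 : ∀ x, N x ^ (2 : ℝ) = N x ^ 2 := fun x => by
      rw [show (2 : ℝ) = ((2 : ℕ) : ℝ) by norm_num, Real.rpow_natCast]
    have e2 : ∀ x, N' x ^ (2 : ℝ) = N' x ^ 2 := fun x => by
      rw [show (2 : ℝ) = ((2 : ℕ) : ℝ) by norm_num, Real.rpow_natCast]
    simp_rw [e1, e2] at this
    rw [Real.sqrt_eq_rpow, Real.sqrt_eq_rpow]
    exact this
  -- identify N with the counting function
  have hNcard : ∀ x, N x = (Nat.card {i : Fin m // ‖f i 0 - x‖ ≤ M + r₀} : ℝ) := by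
    intro x
    have h1 : Nat.card {i : Fin m // ‖f i 0 - x‖ ≤ M + r₀} =
        (Finset.univ.filter (fun i : Fin m => ‖f i 0 - x‖ ≤ M + r₀)).card := by
      rw [Nat.card_eq_fintype_card, Fintype.card_subtype]
    rw [h1, Finset.card_filter]
    push_cast
    rw [hN]
    refine Finset.sum_congr rfl fun i _ => ?_
    rw [hχf]
    simp only [Set.indicator_apply, hBf, Metric.mem_closedBall, dist_eq_norm,
      norm_sub_rev x (f i 0), h𝔯]
  have hN'card : ∀ x, N' x = (Nat.card {j : Fin n // ‖g j 0 - x‖ ≤ M + r₀} : ℝ) := by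
    intro x
    have h1 : Nat.card {j : Fin n // ‖g j 0 - x‖ ≤ M + r₀} =
        (Finset.univ.filter (fun j : Fin n => ‖g j 0 - x‖ ≤ M + r₀)).card := by
      rw [Nat.card_eq_fintype_card, Fintype.card_subtype]
    rw [h1, Finset.card_filter]
    push_cast
    rw [hN']
    refine Finset.sum_congr rfl fun j _ => ?_
    rw [hχg]
    simp only [Set.indicator_apply, hBg, Metric.mem_closedBall, dist_eq_norm,
      norm_sub_rev x (g j 0), h𝔯]
  have hintf : (∫ x, N x ^ 2) =
      ∫ x : EuclideanSpace ℝ (Fin d),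
        ((Nat.card {i : Fin m // ‖f i 0 - x‖ ≤ M + r₀} : ℝ) ^ 2) := by
    apply integral_congr_ae
    filter_upwards with x
    rw [hNcard x]
  have hintg : (∫ x, N' x ^ 2) =
      ∫ x : EuclideanSpace ℝ (Fin d),
        ((Nat.card {j : Fin n // ‖g j 0 - x‖ ≤ M + r₀} : ℝ) ^ 2) := by
    apply integral_congr_ae
    filter_upwards with x
    rw [hN'card x]
  calc ∑ i, ∑ j, ∫ s in (0 : ℝ)..β, v (f i s - g j s)
      ≤ ∑ i, ∑ j, Cv * β / V₀ * (volume (Bf i ∩ Bg j)).toReal :=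
        Finset.sum_le_sum fun i _ => Finset.sum_le_sum fun j _ => hpair i j
    _ = Cv * β / V₀ * ∑ i, ∑ j, (volume (Bf i ∩ Bg j)).toReal := by
        simp_rw [← Finset.mul_sum]
    _ = Cv * β / V₀ * ∫ x, N x * N' x := by rw [hkey]
    _ ≤ Cv * β / V₀ * (Real.sqrt (∫ x, N x ^ 2) * Real.sqrt (∫ x, N' x ^ 2)) := by
        apply mul_le_mul_of_nonneg_left hCS
        positivity
    _ ≤ (Cv + 1) * β / V₀ * (Real.sqrt (∫ x, N x ^ 2) * Real.sqrt (∫ x, N' x ^ 2)) := by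
        apply mul_le_mul_of_nonneg_right _ (by positivity)
        gcongr
        linarith
    _ = (Cv + 1) * β / V₀ *
          Real.sqrt (∫ x : EuclideanSpace ℝ (Fin d),
            ((Nat.card {i : Fin m // ‖f i 0 - x‖ ≤ M + r₀} : ℝ) ^ 2)) *
          Real.sqrt (∫ x : EuclideanSpace ℝ (Fin d),
            ((Nat.card {j : Fin n // ‖g j 0 - x‖ ≤ M + r₀} : ℝ) ^ 2)) := by
        rw [hintf, hintg]; ring
end

section
/- Fix d ≥ 1 and β > 0, and set q_k = (1/k)(4πβk)^{−d/2} for integers k ≥ 1. Let α ≤ 0 be such that ρ := ∑_{k≥1} k q_k e^{αk} is finite, and define the sequence m^α by m^α_k = q_k e^{αk}. Then H(m^α | q) < ∞, and for every sequence m : {1,2,…} → [0,∞) with ∑_{k≥1} k m_k = ρ one has H(m^α | q) ≤ H(m | q); that is, m^α minimizes the relative entropy H(·|q) among all nonnegative sequences with particle density ρ. -/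
open scoped ENNReal NNReal

/-- The relative entropy `H(m|q) = ∑_{k≥1} (q_k − m_k + m_k log(m_k/q_k)) ∈ [0,∞]` of a
nonnegative sequence `m` with respect to `q` (each summand is nonnegative when `q_k > 0`
and `m_k ≥ 0`, with the convention `0·log 0 = 0`, which matches `Real.log 0 = 0`). -/
noncomputable def seqRelEnt (m q : ℕ+ → ℝ) : ℝ≥0∞ :=
  ∑' k : ℕ+, ENNReal.ofReal (q k - m k + m k * Real.log (m k / q k))

private lemma key_ineq (q t b : ℝ) (hq : 0 < q) (hb : 0 ≤ b) :
    q - q * Real.exp t ≤ q - b + b * Real.log (b / q) + (-t) * b := by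
  rcases eq_or_lt_of_le hb with h | h
  · rw [← h]
    have := Real.exp_pos t
    simp
    nlinarith
  · have hbq : 0 < b / q := div_pos h hq
    have h1 := Real.add_one_le_exp (t - Real.log (b / q))
    have h2 : Real.exp (t - Real.log (b / q)) = Real.exp t * (q / b) := by
      rw [Real.exp_sub, Real.exp_log hbq]
      field_simp
    rw [h2] at h1
    have h3 : (t - Real.log (b / q) + 1) * b ≤ Real.exp t * (q / b) * b :=
      mul_le_mul_of_nonneg_right h1 hb
    have h4 : Real.exp t * (q / b) * b = q * Real.exp t := by
      field_simp
    nlinarith [h3, h4]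

private lemma ent_nonneg (q b : ℝ) (hq : 0 < q) (hb : 0 ≤ b) :
    0 ≤ q - b + b * Real.log (b / q) := by
  have := key_ineq q 0 b hq hb
  simp [Real.exp_zero] at this
  linarith

/-- **The tilted sequence minimizes the relative entropy at fixed particle density (free Bose
gas).** For `q_k = (1/k)(4πβk)^{−d/2}`, `α ≤ 0` with `ρ = ∑_k k q_k e^{αk} < ∞`, the sequence
`m^α_k = q_k e^{αk}` has finite relative entropy `H(m^α|q)`, and `H(m^α|q) ≤ H(m|q)` for
every nonnegative sequence `m` with `∑_k k m_k = ρ`. -/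
theorem tilted_sequence_minimizes_relative_entropy
    (d : ℕ) (hd : 1 ≤ d) (β : ℝ) (hβ : 0 < β)
    (q : ℕ+ → ℝ)
    (hq : ∀ k : ℕ+, q k =
      (1 / ((k : ℕ) : ℝ)) * (4 * Real.pi * β * ((k : ℕ) : ℝ)) ^ (-(d : ℝ) / 2))
    (α : ℝ) (hα : α ≤ 0)
    (hsum : Summable fun k : ℕ+ => ((k : ℕ) : ℝ) * (q k * Real.exp (α * ((k : ℕ) : ℝ))))
    (ρ : ℝ) (hρ : ρ = ∑' k : ℕ+, ((k : ℕ) : ℝ) * (q k * Real.exp (α * ((k : ℕ) : ℝ))))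
    (mα : ℕ+ → ℝ) (hmα : ∀ k : ℕ+, mα k = q k * Real.exp (α * ((k : ℕ) : ℝ))) :
    seqRelEnt mα q ≠ ⊤ ∧
      ∀ m : ℕ+ → ℝ, (∀ k, 0 ≤ m k) →
        (∑' k : ℕ+, ENNReal.ofReal (((k : ℕ) : ℝ) * m k)) = ENNReal.ofReal ρ →
        seqRelEnt mα q ≤ seqRelEnt m q := by
  have hπ := Real.pi_pos
  have hkpos : ∀ k : ℕ+, (0 : ℝ) < ((k : ℕ) : ℝ) := fun k => by exact_mod_cast k.pos
  have hqpos : ∀ k : ℕ+, 0 < q k := by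
    intro k
    have hk := hkpos k
    rw [hq k]
    positivity
  -- summability of q
  have hqeq : ∀ k : ℕ+, q k =
      (4 * Real.pi * β) ^ (-(d : ℝ) / 2) * ((k : ℕ) : ℝ) ^ ((-1 : ℝ) + -(d : ℝ) / 2) := by
    intro k
    have hk := hkpos k
    rw [hq k, Real.mul_rpow (by positivity) hk.le, Real.rpow_add hk, Real.rpow_neg_one]
    ring
  have hp : ((-1 : ℝ) + -(d : ℝ) / 2) < -1 := by
    have : (1 : ℝ) ≤ d := by exact_mod_cast hd
    linarith
  have hsq : Summable q := by
    have h0 : Summable (fun n : ℕ => (4 * Real.pi * β) ^ (-(d : ℝ) / 2) *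
        (n : ℝ) ^ ((-1 : ℝ) + -(d : ℝ) / 2)) :=
      (Real.summable_nat_rpow.mpr hp).mul_left _
    have h1 := h0.comp_injective (PNat.coe_injective)
    exact h1.congr fun k => (hqeq k).symm
  -- facts about mα
  have hma_pos : ∀ k : ℕ+, 0 < mα k := fun k => by
    rw [hmα k]; exact mul_pos (hqpos k) (Real.exp_pos _)
  have hlog : ∀ k : ℕ+, Real.log (mα k / q k) = α * ((k : ℕ) : ℝ) := by
    intro k
    rw [hmα k, mul_comm (q k), mul_div_assoc, div_self (hqpos k).ne', mul_one, Real.log_exp]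
  have ht : ∀ k : ℕ+, α * ((k : ℕ) : ℝ) ≤ 0 := fun k =>
    mul_nonpos_iff.mpr (Or.inr ⟨hα, (hkpos k).le⟩)
  have hφa_nonneg : ∀ k : ℕ+, 0 ≤ q k - mα k + mα k * Real.log (mα k / q k) :=
    fun k => ent_nonneg _ _ (hqpos k) (hma_pos k).le
  have hφa_le : ∀ k : ℕ+, q k - mα k + mα k * Real.log (mα k / q k) ≤ q k := by
    intro k
    rw [hlog k]
    nlinarith [hma_pos k, ht k]
  -- finiteness
  have hAfin : seqRelEnt mα q ≠ ⊤ := by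
    have hle : seqRelEnt mα q ≤ ∑' k : ℕ+, ENNReal.ofReal (q k) :=
      ENNReal.tsum_le_tsum fun k => ENNReal.ofReal_le_ofReal (hφa_le k)
    have heq : ∑' k : ℕ+, ENNReal.ofReal (q k) = ENNReal.ofReal (∑' k : ℕ+, q k) :=
      (ENNReal.ofReal_tsum_of_nonneg (fun k => (hqpos k).le) hsq).symm
    exact ne_top_of_le_ne_top (by rw [heq]; exact ENNReal.ofReal_ne_top) hle
  refine ⟨hAfin, ?_⟩
  intro m hm hmsum
  have hαn : (0 : ℝ) ≤ -α := neg_nonneg.mpr hα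
  -- the common tilt-sum
  have hsum' : Summable fun k : ℕ+ => ((k : ℕ) : ℝ) * mα k :=
    hsum.congr fun k => by rw [hmα k]
  have hAsum : (∑' k : ℕ+, ENNReal.ofReal ((-α) * (((k : ℕ) : ℝ) * mα k)))
      = ENNReal.ofReal (-α) * ENNReal.ofReal ρ := by
    rw [tsum_congr fun k : ℕ+ => ENNReal.ofReal_mul (q := ((k : ℕ) : ℝ) * mα k) hαn,
      ENNReal.tsum_mul_left]
    congr 1
    rw [← ENNReal.ofReal_tsum_of_nonneg
      (fun k => mul_nonneg (hkpos k).le (hma_pos k).le) hsum']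
    congr 1
    rw [hρ]
    exact (tsum_congr fun k => by rw [hmα k]).symm
  have hBsum : (∑' k : ℕ+, ENNReal.ofReal ((-α) * (((k : ℕ) : ℝ) * m k)))
      = ENNReal.ofReal (-α) * ENNReal.ofReal ρ := by
    rw [tsum_congr fun k : ℕ+ => ENNReal.ofReal_mul (q := ((k : ℕ) : ℝ) * m k) hαn,
      ENNReal.tsum_mul_left, hmsum]
  -- pointwise inequality
  have hpt : ∀ k : ℕ+,
      ENNReal.ofReal (q k - mα k + mα k * Real.log (mα k / q k)) +
        ENNReal.ofReal ((-α) * (((k : ℕ) : ℝ) * mα k)) ≤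
      ENNReal.ofReal (q k - m k + m k * Real.log (m k / q k)) +
        ENNReal.ofReal ((-α) * (((k : ℕ) : ℝ) * m k)) := by
    intro k
    rw [← ENNReal.ofReal_add (hφa_nonneg k)
        (mul_nonneg hαn (mul_nonneg (hkpos k).le (hma_pos k).le)),
      ← ENNReal.ofReal_add (ent_nonneg _ _ (hqpos k) (hm k))
        (mul_nonneg hαn (mul_nonneg (hkpos k).le (hm k)))]
    apply ENNReal.ofReal_le_ofReal
    have e1 : q k - mα k + mα k * Real.log (mα k / q k) + (-α) * (((k : ℕ) : ℝ) * mα k)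
        = q k - q k * Real.exp (α * ((k : ℕ) : ℝ)) := by
      rw [hlog k, hmα k]; ring
    have e2 : (-α) * (((k : ℕ) : ℝ) * m k) = (-(α * ((k : ℕ) : ℝ))) * m k := by ring
    rw [e1, e2]
    exact key_ineq (q k) (α * ((k : ℕ) : ℝ)) (m k) (hqpos k) (hm k)
  have hmain : seqRelEnt mα q + ENNReal.ofReal (-α) * ENNReal.ofReal ρ ≤
      seqRelEnt m q + ENNReal.ofReal (-α) * ENNReal.ofReal ρ := by
    calc seqRelEnt mα q + ENNReal.ofReal (-α) * ENNReal.ofReal ρ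
        = ∑' k : ℕ+, (ENNReal.ofReal (q k - mα k + mα k * Real.log (mα k / q k)) +
            ENNReal.ofReal ((-α) * (((k : ℕ) : ℝ) * mα k))) := by
          rw [← hAsum, ENNReal.tsum_add]; rfl
      _ ≤ ∑' k : ℕ+, (ENNReal.ofReal (q k - m k + m k * Real.log (m k / q k)) +
            ENNReal.ofReal ((-α) * (((k : ℕ) : ℝ) * m k))) := ENNReal.tsum_le_tsum hpt
      _ = seqRelEnt m q + ENNReal.ofReal (-α) * ENNReal.ofReal ρ := by
          rw [← hBsum, ENNReal.tsum_add]; rfl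
  exact (ENNReal.add_le_add_iff_right
    (ENNReal.mul_ne_top ENNReal.ofReal_ne_top ENNReal.ofReal_ne_top)).mp hmain
end

section
/- Fix d ≥ 3 and β > 0, set q_k = (1/k)(4πβk)^{−d/2} for integers k ≥ 1, and let ρ_c := ∑_{k≥1} k q_k, which is finite and equals (4πβ)^{−d/2} ζ(d/2), where ζ is the Riemann zeta function. Then for every ρ ≥ ρ_c, inf{ H(m|q) : m : {1,2,…} → [0,∞), ∑_{k≥1} k m_k = ρ } = 0; moreover, for every ρ > ρ_c the infimum is not attained, i.e., H(m|q) > 0 for every m with ∑_{k≥1} k m_k = ρ. -/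
open scoped ENNReal NNReal
open Filter

lemma entTerm_nonneg {q x : ℝ} (hq : 0 < q) (hx : 0 ≤ x) :
    0 ≤ q - x + x * Real.log (x / q) := by
  rcases hx.eq_or_lt with h | hx
  · simp [← h, hq.le]
  · have h1 : Real.log (q / x) ≤ q / x - 1 := Real.log_le_sub_one_of_pos (by positivity)
    have h2 : Real.log (x / q) = - Real.log (q / x) := by
      rw [← Real.log_inv]; congr 1; field_simp
    rw [h2]
    have := mul_le_mul_of_nonneg_left h1 hx.le
    have hxq : x * (q / x - 1) = q - x := by field_simp
    nlinarith

/-- the sequence `q` with extra mass `a/(n+1)` placed at site `n+1` -/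
noncomputable def bumpSeq (q : ℕ+ → ℝ) (a : ℝ) (n : ℕ) : ℕ+ → ℝ :=
  fun k => q k + if k = n.succPNat then a / ((n : ℝ) + 1) else 0

lemma inf_zero_aux (q : ℕ+ → ℝ) (C e d2 : ℝ) (hC : 0 < C) (hd2 : 0 < d2) (hee : e = -d2)
    (hqpos : ∀ k, 0 < q k)
    (hkq : ∀ k : ℕ+, ((k : ℕ) : ℝ) * q k = C * ((k : ℕ) : ℝ) ^ e)
    (hsum : Summable (fun k : ℕ+ => ((k : ℕ) : ℝ) * q k))
    (ρc : ℝ) (hρc0 : 0 ≤ ρc)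
    (hofρc : (∑' k : ℕ+, ENNReal.ofReal (((k : ℕ) : ℝ) * q k)) = ENNReal.ofReal ρc)
    (ρ : ℝ) (hρ : ρc ≤ ρ) :
    (⨅ m ∈ {m : ℕ+ → ℝ | (∀ k, 0 ≤ m k) ∧
        (∑' k : ℕ+, ENNReal.ofReal (((k : ℕ) : ℝ) * m k)) = ENNReal.ofReal ρ},
      seqRelEnt m q) = 0 := by
  have he0 : e ≤ 0 := by rw [hee]; linarith
  set a : ℝ := ρ - ρc with ha_def
  have ha0 : 0 ≤ a := by simp [ha_def]; linarith
  have hkpos : ∀ k : ℕ+, (0 : ℝ) < ((k : ℕ) : ℝ) := by intro k; exact_mod_cast k.pos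
  have hKR : ∀ n : ℕ, ((n.succPNat : ℕ) : ℝ) = (n : ℝ) + 1 := by
    intro n; simp [Nat.succPNat]
  have hKrpos : ∀ n : ℕ, (0 : ℝ) < (n : ℝ) + 1 := fun n => by positivity
  have hKr1 : ∀ n : ℕ, (1 : ℝ) ≤ (n : ℝ) + 1 := fun n => by
    have := Nat.cast_nonneg (α := ℝ) n; linarith
  have hanonneg : ∀ n : ℕ, 0 ≤ a / ((n : ℝ) + 1) := fun n => div_nonneg ha0 (hKrpos n).le
  have hMpos : ∀ n k, 0 < bumpSeq q a n k := by
    intro n k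
    unfold bumpSeq
    rcases eq_or_ne k n.succPNat with h | h
    · rw [if_pos h]; have := hqpos k; have := hanonneg n; linarith
    · rw [if_neg h, add_zero]; exact hqpos k
  have hMne : ∀ n k, k ≠ n.succPNat → bumpSeq q a n k = q k := by
    intro n k h; unfold bumpSeq; rw [if_neg h, add_zero]
  have hMK : ∀ n, bumpSeq q a n n.succPNat = q n.succPNat + a / ((n : ℝ) + 1) := by
    intro n; unfold bumpSeq; rw [if_pos rfl]
  have hmem : ∀ n : ℕ, (∀ k, 0 ≤ bumpSeq q a n k) ∧
      (∑' k : ℕ+, ENNReal.ofReal (((k : ℕ) : ℝ) * bumpSeq q a n k)) = ENNReal.ofReal ρ := by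
    intro n
    refine ⟨fun k => (hMpos n k).le, ?_⟩
    have hterm : ∀ k : ℕ+, ((k : ℕ) : ℝ) * bumpSeq q a n k
        = ((k : ℕ) : ℝ) * q k + (if k = n.succPNat then a else 0) := by
      intro k
      rcases eq_or_ne k n.succPNat with h | h
      · subst h
        rw [hMK n, if_pos rfl, hKR n]
        have hne : ((n : ℝ) + 1) ≠ 0 := (hKrpos n).ne'
        field_simp
      · rw [hMne n k h, if_neg h, add_zero]
    calc (∑' k : ℕ+, ENNReal.ofReal (((k : ℕ) : ℝ) * bumpSeq q a n k))
        = ∑' k : ℕ+, (ENNReal.ofReal (((k : ℕ) : ℝ) * q k)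
            + ENNReal.ofReal (if k = n.succPNat then a else 0)) := by
          refine tsum_congr fun k => ?_
          rw [hterm k, ENNReal.ofReal_add (mul_nonneg (hkpos k).le (hqpos k).le)
            (by split <;> simp [ha0])]
      _ = (∑' k : ℕ+, ENNReal.ofReal (((k : ℕ) : ℝ) * q k))
            + ∑' k : ℕ+, ENNReal.ofReal (if k = n.succPNat then a else 0) := ENNReal.tsum_add
      _ = ENNReal.ofReal ρc + ENNReal.ofReal a := by
          rw [hofρc]
          congr 1
          rw [tsum_eq_single n.succPNat (fun b hb => by rw [if_neg hb, ENNReal.ofReal_zero])]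
          rw [if_pos rfl]
      _ = ENNReal.ofReal ρ := by
          rw [← ENNReal.ofReal_add hρc0 ha0]
          congr 1
          simp [ha_def]
  -- the entropy of the bumped sequence
  have hval : ∀ n : ℕ, seqRelEnt (bumpSeq q a n) q =
      ENNReal.ofReal (q n.succPNat - bumpSeq q a n n.succPNat
        + bumpSeq q a n n.succPNat * Real.log (bumpSeq q a n n.succPNat / q n.succPNat)) := by
    intro n
    rw [seqRelEnt]
    refine tsum_eq_single n.succPNat fun b hb => ?_
    rw [hMne n b hb, div_self (hqpos b).ne', Real.log_one]
    simp
  have hTnn : ∀ n : ℕ, 0 ≤ q n.succPNat - bumpSeq q a n n.succPNat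
      + bumpSeq q a n n.succPNat * Real.log (bumpSeq q a n n.succPNat / q n.succPNat) :=
    fun n => entTerm_nonneg (hqpos n.succPNat) (hMpos n n.succPNat).le
  have hTleB : ∀ n : ℕ, q n.succPNat - bumpSeq q a n n.succPNat
      + bumpSeq q a n n.succPNat * Real.log (bumpSeq q a n n.succPNat / q n.succPNat)
      ≤ (C + a) * (Real.log (1 + a / C) * (1 / ((n : ℝ) + 1))
          + d2 * (Real.log ((n : ℝ) + 1) / ((n : ℝ) + 1))) := by
    intro n
    have hKrp : (0 : ℝ) < (n : ℝ) + 1 := hKrpos n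
    have hKr1' : (1 : ℝ) ≤ (n : ℝ) + 1 := hKr1 n
    have hx : q n.succPNat * ((n : ℝ) + 1) = C * ((n : ℝ) + 1) ^ e := by
      have h := hkq n.succPNat
      rw [hKR n] at h
      rw [mul_comm]; exact h
    have hxpos := hqpos n.succPNat
    have hPpos : 0 < ((n : ℝ) + 1) ^ e := Real.rpow_pos_of_pos hKrp e
    have hP1 : ((n : ℝ) + 1) ^ e ≤ 1 :=
      Real.rpow_le_one_of_one_le_of_nonpos hKr1' he0
    have hY1 : 1 ≤ ((n : ℝ) + 1) ^ d2 := Real.one_le_rpow hKr1' hd2.le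
    have hratio : bumpSeq q a n n.succPNat / q n.succPNat
        = 1 + (a / C) * ((n : ℝ) + 1) ^ d2 := by
      rw [hMK n]
      have hxval : q n.succPNat = C * ((n : ℝ) + 1) ^ e / ((n : ℝ) + 1) := by
        field_simp [hKrp.ne'] at hx ⊢
        linarith
      rw [hxval]
      have hrw : ((n : ℝ) + 1) ^ d2 = (((n : ℝ) + 1) ^ e)⁻¹ := by
        rw [← Real.rpow_neg hKrp.le]
        congr 1
        rw [hee]; ring
      rw [hrw]
      field_simp
    have hR1 : (1 : ℝ) ≤ bumpSeq q a n n.succPNat / q n.succPNat := by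
      rw [hratio]
      have : 0 ≤ (a / C) * ((n : ℝ) + 1) ^ d2 := by positivity
      linarith
    have hlogR : Real.log (bumpSeq q a n n.succPNat / q n.succPNat)
        ≤ Real.log (1 + a / C) + d2 * Real.log ((n : ℝ) + 1) := by
      have hle : bumpSeq q a n n.succPNat / q n.succPNat
          ≤ (1 + a / C) * ((n : ℝ) + 1) ^ d2 := by
        rw [hratio]
        nlinarith [hY1, div_nonneg ha0 hC.le]
      calc Real.log (bumpSeq q a n n.succPNat / q n.succPNat)
          ≤ Real.log ((1 + a / C) * ((n : ℝ) + 1) ^ d2) :=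
            (Real.log_le_log_iff (by linarith) (by positivity)).mpr hle
        _ = Real.log (1 + a / C) + d2 * Real.log ((n : ℝ) + 1) := by
            rw [Real.log_mul (by positivity) (by positivity), Real.log_rpow hKrp]
    have hlogRnn : 0 ≤ Real.log (bumpSeq q a n n.succPNat / q n.succPNat) :=
      Real.log_nonneg hR1
    have hxle : q n.succPNat ≤ C / ((n : ℝ) + 1) := by
      rw [le_div_iff₀ hKrp, hx]
      nlinarith
    have hMle : bumpSeq q a n n.succPNat ≤ (C + a) / ((n : ℝ) + 1) := by
      rw [hMK n, add_div]
      exact add_le_add hxle le_rfl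
    have hlogB : 0 ≤ Real.log (1 + a / C) + d2 * Real.log ((n : ℝ) + 1) := by
      have h1 : 0 ≤ Real.log (1 + a / C) := Real.log_nonneg (by
        have : 0 ≤ a / C := div_nonneg ha0 hC.le
        linarith)
      have h2 : 0 ≤ Real.log ((n : ℝ) + 1) := Real.log_nonneg hKr1'
      positivity
    have hdrop : q n.succPNat - bumpSeq q a n n.succPNat ≤ 0 := by
      rw [hMK n]
      have := hanonneg n
      linarith
    have hfinal : bumpSeq q a n n.succPNat
          * Real.log (bumpSeq q a n n.succPNat / q n.succPNat)
        ≤ ((C + a) / ((n : ℝ) + 1))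
            * (Real.log (1 + a / C) + d2 * Real.log ((n : ℝ) + 1)) :=
      mul_le_mul hMle hlogR hlogRnn (by positivity)
    have heq : ((C + a) / ((n : ℝ) + 1))
          * (Real.log (1 + a / C) + d2 * Real.log ((n : ℝ) + 1))
        = (C + a) * (Real.log (1 + a / C) * (1 / ((n : ℝ) + 1))
          + d2 * (Real.log ((n : ℝ) + 1) / ((n : ℝ) + 1))) := by
      ring
    linarith
  -- limits
  have hKrtop : Tendsto (fun n : ℕ => (n : ℝ) + 1) atTop atTop :=
    tendsto_atTop_add_const_right _ 1 tendsto_natCast_atTop_atTop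
  have h1 : Tendsto (fun n : ℕ => 1 / ((n : ℝ) + 1)) atTop (nhds 0) := by
    simpa [one_div, Function.comp_def] using tendsto_inv_atTop_zero.comp hKrtop
  have h2 : Tendsto (fun n : ℕ => Real.log ((n : ℝ) + 1) / ((n : ℝ) + 1)) atTop (nhds 0) := by
    have h := Real.isLittleO_log_id_atTop.tendsto_div_nhds_zero
    have := h.comp hKrtop
    simpa [Function.comp_def] using this
  have hB0 : Tendsto (fun n : ℕ => (C + a) * (Real.log (1 + a / C) * (1 / ((n : ℝ) + 1))
      + d2 * (Real.log ((n : ℝ) + 1) / ((n : ℝ) + 1)))) atTop (nhds 0) := by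
    have h := (((h1.const_mul (Real.log (1 + a / C))).add
      (h2.const_mul d2)).const_mul (C + a))
    simpa using h
  have hT0 : Tendsto (fun n : ℕ => q n.succPNat - bumpSeq q a n n.succPNat
      + bumpSeq q a n n.succPNat * Real.log (bumpSeq q a n n.succPNat / q n.succPNat))
      atTop (nhds 0) := squeeze_zero hTnn hTleB hB0
  have hofT : Tendsto (fun n : ℕ => seqRelEnt (bumpSeq q a n) q) atTop (nhds 0) := by
    have := ENNReal.tendsto_ofReal hT0
    rw [ENNReal.ofReal_zero] at this
    refine this.congr fun n => (hval n).symm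
  refine le_antisymm ?_ zero_le
  refine ge_of_tendsto' hofT fun n => ?_
  exact iInf₂_le (bumpSeq q a n) (hmem n)

lemma entTerm_eq_zero {q x : ℝ} (hq : 0 < q) (hx : 0 ≤ x)
    (h : q - x + x * Real.log (x / q) ≤ 0) : x = q := by
  rcases hx.eq_or_lt with h0 | hx
  · exfalso; rw [← h0] at h; simp at h; linarith
  · by_contra hne
    have hq1 : q / x ≠ 1 := by
      intro hh; apply hne; field_simp at hh; linarith
    have h1 : Real.log (q / x) < q / x - 1 := Real.log_lt_sub_one_of_pos (by positivity) hq1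
    have h2 : Real.log (x / q) = - Real.log (q / x) := by
      rw [← Real.log_inv]; congr 1; field_simp
    rw [h2] at h
    have := mul_lt_mul_of_pos_left h1 hx
    have hxq : x * (q / x - 1) = q - x := by field_simp
    nlinarith

/-- **Condensation plateau of the free Bose gas.** For `d ≥ 3` and
`q_k = (1/k)(4πβk)^{−d/2}`, the critical density `ρ_c = ∑_k k q_k` is finite and equals
`(4πβ)^{−d/2} ζ(d/2)`. For every `ρ ≥ ρ_c` the infimum of `H(m|q)` over nonnegative
sequences with particle density `ρ` is `0`, and for `ρ > ρ_c` it is not attained: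
`H(m|q) > 0` for every such `m`. -/
theorem free_bose_condensation_plateau
    (d : ℕ) (hd : 3 ≤ d) (β : ℝ) (hβ : 0 < β)
    (q : ℕ+ → ℝ)
    (hq : ∀ k : ℕ+, q k =
      (1 / ((k : ℕ) : ℝ)) * (4 * Real.pi * β * ((k : ℕ) : ℝ)) ^ (-(d : ℝ) / 2))
    (ρc : ℝ) (hρc : ρc = ∑' k : ℕ+, ((k : ℕ) : ℝ) * q k) :
    (Summable fun k : ℕ+ => ((k : ℕ) : ℝ) * q k) ∧
      ((ρc : ℂ) = (4 * Real.pi * β : ℂ) ^ (-(d : ℂ) / 2) * riemannZeta ((d : ℂ) / 2)) ∧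
      (∀ ρ : ℝ, ρc ≤ ρ →
        (⨅ m ∈ {m : ℕ+ → ℝ | (∀ k, 0 ≤ m k) ∧
            (∑' k : ℕ+, ENNReal.ofReal (((k : ℕ) : ℝ) * m k)) = ENNReal.ofReal ρ},
          seqRelEnt m q) = 0) ∧
      ∀ ρ : ℝ, ρc < ρ →
        ∀ m : ℕ+ → ℝ, (∀ k, 0 ≤ m k) →
          (∑' k : ℕ+, ENNReal.ofReal (((k : ℕ) : ℝ) * m k)) = ENNReal.ofReal ρ →
          0 < seqRelEnt m q := by
  have hπ : 0 < Real.pi := Real.pi_pos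
  set e : ℝ := -(d : ℝ) / 2 with he_def
  have hd3 : (3 : ℝ) ≤ (d : ℝ) := by exact_mod_cast hd
  have he : e < -1 := by rw [he_def]; linarith
  have he0 : e ≤ 0 := by linarith
  have hβ4 : (0 : ℝ) < 4 * Real.pi * β := by positivity
  set C : ℝ := (4 * Real.pi * β) ^ e with hC_def
  have hC : 0 < C := Real.rpow_pos_of_pos hβ4 e
  have hkpos : ∀ k : ℕ+, (0 : ℝ) < ((k : ℕ) : ℝ) := by
    intro k; exact_mod_cast k.pos
  have hqpos : ∀ k : ℕ+, 0 < q k := by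
    intro k; rw [hq k]
    have := hkpos k
    positivity
  have hkq : ∀ k : ℕ+, ((k : ℕ) : ℝ) * q k = C * ((k : ℕ) : ℝ) ^ e := by
    intro k
    have hk := hkpos k
    rw [hq k, Real.mul_rpow hβ4.le hk.le]
    field_simp
    exact hC_def.symm
  have hsume : Summable (fun k : ℕ+ => ((k : ℕ) : ℝ) ^ e) := by
    have h := (Real.summable_nat_rpow (p := e)).mpr he
    exact h.comp_injective PNat.coe_injective
  have hsum : Summable (fun k : ℕ+ => ((k : ℕ) : ℝ) * q k) :=
    (hsume.mul_left C).congr fun k => (hkq k).symm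
  have hρc0 : 0 ≤ ρc := by
    rw [hρc]
    exact tsum_nonneg fun k => mul_nonneg (hkpos k).le (hqpos k).le
  have hofρc : (∑' k : ℕ+, ENNReal.ofReal (((k : ℕ) : ℝ) * q k)) = ENNReal.ofReal ρc := by
    rw [hρc]
    exact (ENNReal.ofReal_tsum_of_nonneg
      (fun k => mul_nonneg (hkpos k).le (hqpos k).le) hsum).symm
  refine ⟨hsum, ?_, ?_, ?_⟩
  · -- zeta identity
    have hre : 1 < ((d : ℂ) / 2).re := by
      have : ((d : ℂ) / 2) = (((d : ℝ) / 2 : ℝ) : ℂ) := by push_cast; ring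
      rw [this, Complex.ofReal_re]; linarith
    have hz := zeta_eq_tsum_one_div_nat_add_one_cpow hre
    have hSn : ρc = C * ∑' n : ℕ, ((n : ℝ) + 1) ^ e := by
      rw [hρc]
      calc ∑' k : ℕ+, ((k : ℕ) : ℝ) * q k = ∑' k : ℕ+, C * ((k : ℕ) : ℝ) ^ e :=
            tsum_congr hkq
        _ = C * ∑' k : ℕ+, ((k : ℕ) : ℝ) ^ e := tsum_mul_left
        _ = C * ∑' n : ℕ, ((n : ℝ) + 1) ^ e := by
            congr 1
            rw [← Equiv.pnatEquivNat.symm.tsum_eq (fun k : ℕ+ => ((k : ℕ) : ℝ) ^ e)]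
            refine tsum_congr fun n => ?_
            simp [Nat.succPNat]
    rw [hSn, hz]
    have hCc : ((C : ℝ) : ℂ) = (4 * (Real.pi : ℂ) * (β : ℂ)) ^ (-(d : ℂ) / 2) := by
      rw [hC_def, he_def, Complex.ofReal_cpow hβ4.le]
      push_cast
      norm_num
    rw [Complex.ofReal_mul, Complex.ofReal_tsum, hCc]
    congr 1
    refine tsum_congr fun n => ?_
    have hn1 : (0 : ℝ) ≤ (n : ℝ) + 1 := by positivity
    have h1 := Complex.ofReal_cpow hn1 e
    rw [h1, he_def]
    push_cast
    rw [show (-(d : ℂ) / 2 : ℂ) = -((d : ℂ) / 2) by ring]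
    rw [Complex.cpow_neg, one_div]
  · -- infimum is zero
    intro ρ hρ
    exact inf_zero_aux q C e ((d : ℝ) / 2) hC (by linarith) (by rw [he_def]; ring)
      hqpos hkq hsum ρc hρc0 hofρc ρ hρ
  · -- not attained
    intro ρ hρ m hm hmass
    rw [pos_iff_ne_zero]
    intro h0
    rw [seqRelEnt, ENNReal.tsum_eq_zero] at h0
    have hmq : ∀ k, m k = q k := by
      intro k
      have hk := h0 k
      rw [ENNReal.ofReal_eq_zero] at hk
      exact entTerm_eq_zero (hqpos k) (hm k) hk
    have heqc : (∑' k : ℕ+, ENNReal.ofReal (((k : ℕ) : ℝ) * m k)) = ENNReal.ofReal ρc := by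
      rw [← hofρc]
      exact tsum_congr fun k => by rw [hmq k]
    rw [hmass] at heqc
    have hlt : ENNReal.ofReal ρc < ENNReal.ofReal ρ :=
      (ENNReal.ofReal_lt_ofReal_iff_of_nonneg hρc0).mpr hρ
    rw [← heqc] at hlt
    exact lt_irrefl _ hlt
end
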